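/- arXiv:1803.06537 — 6 statements merged into one kernel-verified Lean document; each statement's English description precedes it below -/
import Mathlib

section
/- Let p ≥ 1 affine maps f_i(x) = A_i x + b_i on ℝ^D with λ_H = max_{1≤i≤p} ‖A_i‖ (operator norm). Let K_0 be a nonempty compact subset of ℝ^D and let (K_n)_n and (d_n)_n be the renormalized Hutchinson orbit and its normalizing sequence. If the sequence (d_n)_n converges to a positive number d with d > λ_H, then the sequence (K_n)_n converges in the Hausdorff metric to the attractor L_d of the contractive IFS {f_1/d, …, f_p/d}. -/
/-!
The normalized orbit is compared with the attractor through the fixed-point identity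
`L = d⁻¹ • H(L)`: writing `K_{n+1} = d_n⁻¹ • H(K_n)`, the Hausdorff distance `u_n` from `K_n`
to `L` satisfies `u_{n+1} ≤ (λ_H / d_n) u_n + |d_n⁻¹ - d⁻¹| ρ(H(L))`, because each `f_i` is
`λ_H`-Lipschitz and rescaling a set by two different factors moves it by at most the difference
of the factors times its radius. Since `λ_H / d_n → λ_H / d < 1` and the error term tends to `0`,
the recursion forces `u_n → 0`.
-/

open Metric Filter Pointwise Topology

noncomputable section

/-- The radius function `ρ(K) = sup {‖x‖ : x ∈ K}`. -/
def rad {D : ℕ} (K : Set (EuclideanSpace ℝ (Fin D))) : ℝ := sSup (norm '' K)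

/-- The Hutchinson operator `H(K) = ⋃ i, f i '' K`. -/
def hutch {D p : ℕ} (f : Fin (p + 1) → EuclideanSpace ℝ (Fin D) → EuclideanSpace ℝ (Fin D))
    (K : Set (EuclideanSpace ℝ (Fin D))) : Set (EuclideanSpace ℝ (Fin D)) := ⋃ i, f i '' K

/-- The renormalized Hutchinson operator `H_ρ(K) = ρ(H(K))⁻¹ • H(K)`. -/
def hutchRho {D p : ℕ} (f : Fin (p + 1) → EuclideanSpace ℝ (Fin D) → EuclideanSpace ℝ (Fin D))
    (K : Set (EuclideanSpace ℝ (Fin D))) : Set (EuclideanSpace ℝ (Fin D)) :=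
  (rad (hutch f K))⁻¹ • hutch f K

open scoped NNReal

section Sequences

theorem tendsto_zero_of_le_const_mul_add {u ε : ℕ → ℝ} {q : ℝ} (hq0 : 0 ≤ q) (hq1 : q < 1)
    (hu : ∀ n, 0 ≤ u n) (hε : Tendsto ε atTop (𝓝 0))
    (hrec : ∀ᶠ n in atTop, u (n + 1) ≤ q * u n + ε n) :
    Tendsto u atTop (𝓝 0) := by
  rw [Metric.tendsto_atTop]
  intro δ hδ
  have hδq : 0 < (1 - q) * (δ / 2) := mul_pos (sub_pos.2 hq1) (half_pos hδ)
  obtain ⟨N, hN⟩ := (hrec.and (hε.eventually_lt_const hδq)).exists_forall_of_atTop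
  -- `δ / 2` is the fixed point of `t ↦ q * t + (1 - q) * (δ / 2)`.
  have hbound : ∀ k, u (N + k) ≤ q ^ k * u N + δ / 2 := by
    intro k
    induction k with
    | zero => simp only [add_zero, pow_zero, one_mul]; linarith
    | succ k ih =>
      obtain ⟨hstep, hεN⟩ := hN (N + k) (Nat.le_add_right N k)
      calc u (N + (k + 1)) ≤ q * u (N + k) + ε (N + k) := hstep
        _ ≤ q * (q ^ k * u N + δ / 2) + (1 - q) * (δ / 2) :=
          add_le_add (mul_le_mul_of_nonneg_left ih hq0) hεN.le
        _ = q ^ (k + 1) * u N + δ / 2 := by ring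
  have hpow : Tendsto (fun k => q ^ k * u N) atTop (𝓝 0) := by
    simpa using (tendsto_pow_atTop_nhds_zero_of_lt_one hq0 hq1).mul_const (u N)
  obtain ⟨M, hM⟩ := (hpow.eventually_lt_const (half_pos hδ)).exists_forall_of_atTop
  refine ⟨N + M, fun n hn => ?_⟩
  obtain ⟨k, rfl⟩ := Nat.exists_eq_add_of_le (le_of_add_le_left hn)
  rw [Real.dist_eq, sub_zero, abs_of_nonneg (hu _)]
  linarith [hbound k, hM k (by omega)]

theorem tendsto_zero_of_le_mul_add {u c ε : ℕ → ℝ} {r : ℝ} (hr : r < 1) (hu : ∀ n, 0 ≤ u n)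
    (hc : Tendsto c atTop (𝓝 r)) (hε : Tendsto ε atTop (𝓝 0))
    (hrec : ∀ n, u (n + 1) ≤ c n * u n + ε n) :
    Tendsto u atTop (𝓝 0) := by
  obtain ⟨q, hrq, hq1⟩ := exists_between (max_lt hr zero_lt_one)
  refine tendsto_zero_of_le_const_mul_add ((le_max_right r 0).trans hrq.le) hq1 hu hε ?_
  filter_upwards [hc.eventually_lt_const ((le_max_left r 0).trans_lt hrq)] with n hn
  exact (hrec n).trans (add_le_add (mul_le_mul_of_nonneg_right hn.le (hu n)) le_rfl)

end Sequences

section HausdorffDistance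

variable {α β : Type*} [PseudoMetricSpace α] [PseudoMetricSpace β]

theorem infDist_image_le_mul {g : α → β} {K : ℝ≥0} (hg : LipschitzWith K g) {t : Set α}
    (ht : IsCompact t) (ht' : t.Nonempty) (x : α) :
    infDist (g x) (g '' t) ≤ K * infDist x t := by
  obtain ⟨y, hy, hxy⟩ := ht.exists_infDist_eq_dist ht' x
  rw [hxy]
  exact (infDist_le_dist_of_mem (Set.mem_image_of_mem g hy)).trans (hg.dist_le_mul x y)

theorem hausdorffDist_iUnion_image_le {ι : Type*} {g : ι → α → β} {K : ℝ≥0}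
    (hg : ∀ i, LipschitzWith K (g i)) {s t : Set α} (hs : IsCompact s) (hs' : s.Nonempty)
    (ht : IsCompact t) (ht' : t.Nonempty) :
    hausdorffDist (⋃ i, g i '' s) (⋃ i, g i '' t) ≤ K * hausdorffDist s t := by
  have key : ∀ {s t : Set α}, IsCompact s → s.Nonempty → IsCompact t → t.Nonempty →
      ∀ x ∈ ⋃ i, g i '' s, infDist x (⋃ i, g i '' t) ≤ K * hausdorffDist s t := by
    intro s t hs hs' ht ht' x hx
    obtain ⟨i, y, hy, rfl⟩ := Set.mem_iUnion.1 hx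
    calc infDist (g i y) (⋃ j, g j '' t) ≤ infDist (g i y) (g i '' t) :=
          infDist_le_infDist_of_subset (Set.subset_iUnion (fun j => g j '' t) i) (ht'.image _)
      _ ≤ K * infDist y t := infDist_image_le_mul (hg i) ht ht' y
      _ ≤ K * hausdorffDist s t := by
          gcongr
          exact infDist_le_hausdorffDist_of_mem hy
            (hausdorffEDist_ne_top_of_nonempty_of_bounded hs' ht' hs.isBounded ht.isBounded)
  refine hausdorffDist_le_of_infDist (mul_nonneg K.coe_nonneg hausdorffDist_nonneg) (key hs hs' ht ht') ?_
  rw [hausdorffDist_comm]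
  exact key ht ht' hs hs'

theorem hausdorffDist_smul_smul_le {E : Type*} [SeminormedAddCommGroup E] [NormedSpace ℝ E]
    {S : Set E} {R : ℝ} (hS : S.Nonempty) (hR : ∀ x ∈ S, ‖x‖ ≤ R) (a c : ℝ) :
    hausdorffDist (a • S) (c • S) ≤ |a - c| * R := by
  obtain ⟨x₀, hx₀⟩ := hS
  have key : ∀ a c : ℝ, ∀ x ∈ a • S, ∃ y ∈ c • S, dist x y ≤ |a - c| * R := by
    rintro a c _ ⟨x, hx, rfl⟩
    refine ⟨c • x, Set.smul_mem_smul_set hx, ?_⟩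
    rw [dist_eq_norm, ← sub_smul, norm_smul, Real.norm_eq_abs]
    exact mul_le_mul_of_nonneg_left (hR x hx) (abs_nonneg _)
  refine hausdorffDist_le_of_mem_dist
    (mul_nonneg (abs_nonneg _) ((norm_nonneg x₀).trans (hR x₀ hx₀))) (key a c) ?_
  simpa only [abs_sub_comm] using key c a

end HausdorffDistance

theorem exists_lipschitzWith_affine {ι 𝕜 E F : Type*} [Fintype ι] [Nonempty ι]
    [NontriviallyNormedField 𝕜] [SeminormedAddCommGroup E] [NormedSpace 𝕜 E]
    [SeminormedAddCommGroup F] [NormedSpace 𝕜 F] (A : ι → E →L[𝕜] F) (b : ι → F) :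
    ∃ K : ℝ≥0, (K : ℝ) = Finset.univ.sup' Finset.univ_nonempty (fun i => ‖A i‖) ∧
      ∀ i, LipschitzWith K (fun x => A i x + b i) := by
  obtain ⟨i₀, -, hi₀⟩ := Finset.exists_mem_eq_sup' Finset.univ_nonempty (fun i => ‖A i‖)
  refine ⟨‖A i₀‖₊, hi₀.symm, fun i => ?_⟩
  have hle : ‖A i‖₊ ≤ ‖A i₀‖₊ := by
    rw [← NNReal.coe_le_coe, coe_nnnorm, coe_nnnorm, ← hi₀]
    exact Finset.le_sup' (fun j => ‖A j‖) (Finset.mem_univ i)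
  exact ((isometry_add_right (b i)).lipschitz.comp (A i).lipschitz).weaken (by simpa using hle)

theorem norm_le_rad {D : ℕ} {K : Set (EuclideanSpace ℝ (Fin D))} (hK : IsCompact K)
    {x : EuclideanSpace ℝ (Fin D)} (hx : x ∈ K) : ‖x‖ ≤ rad K :=
  le_csSup (hK.image continuous_norm).bddAbove (Set.mem_image_of_mem _ hx)

section Hutchinson

variable {D p : ℕ} {f : Fin (p + 1) → EuclideanSpace ℝ (Fin D) → EuclideanSpace ℝ (Fin D)}

theorem smul_hutch (a : ℝ) (S : Set (EuclideanSpace ℝ (Fin D))) :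
    a • hutch f S = hutch (fun i => (a • ·) ∘ f i) S := by
  simp only [hutch, Set.smul_set_iUnion, Set.image_comp, Set.image_smul]

theorem isCompact_hutch (hf : ∀ i, Continuous (f i)) {S : Set (EuclideanSpace ℝ (Fin D))}
    (hS : IsCompact S) : IsCompact (hutch f S) :=
  isCompact_iUnion fun i => hS.image (hf i)

theorem hutch_nonempty {S : Set (EuclideanSpace ℝ (Fin D))} (hS : S.Nonempty) :
    (hutch f S).Nonempty :=
  (hS.image (f 0)).mono (Set.subset_iUnion (fun i => f i '' S) 0)

theorem hausdorffDist_smul_hutch_le {K : ℝ≥0} (hf : ∀ i, LipschitzWith K (f i))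
    {S L : Set (EuclideanSpace ℝ (Fin D))} (hS : IsCompact S) (hS' : S.Nonempty)
    (hL : IsCompact L) (hL' : L.Nonempty) (a c : ℝ) :
    hausdorffDist (a • hutch f S) (c • hutch f L) ≤
      |a| * K * hausdorffDist S L + |a - c| * rad (hutch f L) := by
  have hfc : ∀ i, Continuous (f i) := fun i => (hf i).continuous
  have hHS := isCompact_hutch hfc hS
  have hHL := isCompact_hutch hfc hL
  have hHL' : (hutch f L).Nonempty := hutch_nonempty hL'
  calc hausdorffDist (a • hutch f S) (c • hutch f L)
      ≤ hausdorffDist (a • hutch f S) (a • hutch f L) +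
          hausdorffDist (a • hutch f L) (c • hutch f L) :=
        hausdorffDist_triangle (hausdorffEDist_ne_top_of_nonempty_of_bounded
          (hutch_nonempty hS').smul_set hHL'.smul_set (hHS.smul a).isBounded
          (hHL.smul a).isBounded)
    _ ≤ |a| * K * hausdorffDist S L + |a - c| * rad (hutch f L) := by
        gcongr
        · rw [smul_hutch, smul_hutch]
          refine (hausdorffDist_iUnion_image_le
            (fun i => (lipschitzWith_smul a).comp (hf i)) hS hS' hL hL').trans_eq ?_
          rw [NNReal.coe_mul, coe_nnnorm, Real.norm_eq_abs]
        · exact hausdorffDist_smul_smul_le hHL' (fun x hx => norm_le_rad hHL hx) a c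

theorem hutchRho_iterate_succ (K₀ : Set (EuclideanSpace ℝ (Fin D))) (n : ℕ) :
    (hutchRho f)^[n + 1] K₀ =
      (rad (hutch f ((hutchRho f)^[n] K₀)))⁻¹ • hutch f ((hutchRho f)^[n] K₀) :=
  Function.iterate_succ_apply' _ _ _

theorem isCompact_hutchRho_iterate (hf : ∀ i, Continuous (f i))
    {K₀ : Set (EuclideanSpace ℝ (Fin D))} (hK₀ : IsCompact K₀) (n : ℕ) :
    IsCompact ((hutchRho f)^[n] K₀) := by
  induction n with
  | zero => exact hK₀
  | succ n ih => rw [hutchRho_iterate_succ]; exact (isCompact_hutch hf ih).smul _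

theorem hutchRho_iterate_nonempty {K₀ : Set (EuclideanSpace ℝ (Fin D))} (hK₀ : K₀.Nonempty)
    (n : ℕ) : ((hutchRho f)^[n] K₀).Nonempty := by
  induction n with
  | zero => exact hK₀
  | succ n ih => rw [hutchRho_iterate_succ]; exact (hutch_nonempty ih).smul_set

end Hutchinson

theorem stmt0_general {D p : ℕ}
    (A : Fin (p + 1) → EuclideanSpace ℝ (Fin D) →L[ℝ] EuclideanSpace ℝ (Fin D))
    (b : Fin (p + 1) → EuclideanSpace ℝ (Fin D))
    (f : Fin (p + 1) → EuclideanSpace ℝ (Fin D) → EuclideanSpace ℝ (Fin D))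
    (hf : ∀ i x, f i x = A i x + b i)
    (K₀ : Set (EuclideanSpace ℝ (Fin D))) (hK₀c : IsCompact K₀) (hK₀ne : K₀.Nonempty)
    (d : ℝ)
    (hd : Tendsto (fun n => rad (hutch f ((hutchRho f)^[n] K₀))) atTop (𝓝 d))
    (hdgt : Finset.univ.sup' Finset.univ_nonempty (fun i => ‖A i‖) < d)
    (L : Set (EuclideanSpace ℝ (Fin D))) (hLc : IsCompact L) (hLne : L.Nonempty)
    (hL : d⁻¹ • hutch f L = L) :
    Tendsto (fun n => hausdorffDist ((hutchRho f)^[n] K₀) L) atTop (𝓝 0) := by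
  obtain ⟨K, hKA, hAK⟩ := exists_lipschitzWith_affine A b
  have hfK : ∀ i, LipschitzWith K (f i) := fun i => by rw [funext (hf i)]; exact hAK i
  rw [← hKA] at hdgt
  have hd₀ : 0 < d := K.coe_nonneg.trans_lt hdgt
  have hdinv := hd.inv₀ hd₀.ne'
  have hε : Tendsto (fun n => |(rad (hutch f ((hutchRho f)^[n] K₀)))⁻¹ - d⁻¹| * rad (hutch f L))
      atTop (𝓝 0) := by
    simpa using (hdinv.sub_const d⁻¹).abs.mul_const (rad (hutch f L))
  refine tendsto_zero_of_le_mul_add (r := |d⁻¹| * K) ?_ (fun n => hausdorffDist_nonneg)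
    (hdinv.abs.mul_const _) hε fun n => ?_
  · rwa [abs_of_pos (inv_pos.2 hd₀), inv_mul_lt_one₀ hd₀]
  · calc hausdorffDist ((hutchRho f)^[n + 1] K₀) L
        = hausdorffDist ((rad (hutch f ((hutchRho f)^[n] K₀)))⁻¹ • hutch f ((hutchRho f)^[n] K₀))
            (d⁻¹ • hutch f L) := by rw [hutchRho_iterate_succ, hL]
      _ ≤ _ := hausdorffDist_smul_hutch_le hfK
            (isCompact_hutchRho_iterate (fun i => (hfK i).continuous) hK₀c n)
            (hutchRho_iterate_nonempty hK₀ne n) hLc hLne _ _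

/-- Theorem `theo:renorm`. If the normalizing sequence `(d_n)` of the
renormalized Hutchinson orbit of `K₀` converges to `d > λ_H`, then `(K_n)` converges in the
Hausdorff metric to the attractor `L_d` of the contractive IFS `{f₁/d, …, f_p/d}`. -/
theorem stmt0 {D p : ℕ}
    (A : Fin (p + 1) → EuclideanSpace ℝ (Fin D) →L[ℝ] EuclideanSpace ℝ (Fin D))
    (b : Fin (p + 1) → EuclideanSpace ℝ (Fin D))
    (f : Fin (p + 1) → EuclideanSpace ℝ (Fin D) → EuclideanSpace ℝ (Fin D))
    (hf : ∀ i x, f i x = A i x + b i)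
    (K₀ : Set (EuclideanSpace ℝ (Fin D))) (hK₀c : IsCompact K₀) (hK₀ne : K₀.Nonempty)
    (hpos : ∀ n, 0 < rad (hutch f ((hutchRho f)^[n] K₀)))
    (d : ℝ) (hdpos : 0 < d)
    (hd : Tendsto (fun n => rad (hutch f ((hutchRho f)^[n] K₀))) atTop (𝓝 d))
    (hdgt : Finset.univ.sup' Finset.univ_nonempty (fun i => ‖A i‖) < d)
    (L : Set (EuclideanSpace ℝ (Fin D))) (hLc : IsCompact L) (hLne : L.Nonempty)
    (hL : d⁻¹ • hutch f L = L) :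
    Tendsto (fun n => hausdorffDist ((hutchRho f)^[n] K₀) L) atTop (𝓝 0) :=
  stmt0_general A b f hf K₀ hK₀c hK₀ne d hd hdgt L hLc hLne hL
end
end

section
/- Let p ≥ 1 affine maps f_i(x) = A_i x + b_i on ℝ^D with ‖A_i‖ < 1 for all i ∈ {1,…,p}. Let z_i denote the unique fixed point of f_i and let L be the attractor of the IFS {f_1,…,f_p}. If f_j(z_i) belongs to the convex hull of {z_1,…,z_p} for all i, j ∈ {1,…,p}, then the convex hull of L equals the convex hull of {z_1,…,z_p}. -/
/-! The fixed points lie in `L` and `L` lies in `P = conv{z_i}`, both for the same reason: if a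
`K`-contraction `g` maps a closed set `C` into itself, then `infDist (g x) C ≤ K * infDist x C`.
For `z_i ∈ L` apply this with `C = L` at the fixed point; for `L ⊆ P` apply it with `C = P`
(invariant because the `f_j` are affine) at a point of `L = ⋃ f_i '' L` maximising the distance
to `P`. Hence `conv L = P`. -/

open Metric Filter Pointwise Topology

noncomputable section

open Set Function
open scoped NNReal

section Contraction

variable {X : Type*} [MetricSpace X] {g : X → X} {K : ℝ≥0} {C : Set X}

lemma LipschitzWith.infDist_apply_le_of_mapsTo [ProperSpace X] (hg : LipschitzWith K g)
    (hC : IsClosed C) (hgC : MapsTo g C C) (x : X) : infDist (g x) C ≤ K * infDist x C := by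
  rcases C.eq_empty_or_nonempty with rfl | hCne
  · simp
  obtain ⟨y, hyC, hxy⟩ := hC.exists_infDist_eq_dist hCne x
  calc infDist (g x) C ≤ dist (g x) (g y) := infDist_le_dist_of_mem (hgC hyC)
    _ ≤ K * dist x y := hg.dist_le_mul x y
    _ = K * infDist x C := by rw [hxy]

lemma ContractingWith.infDist_eq_zero_of_le (hg : ContractingWith K g) {x : X}
    (h : infDist x C ≤ K * infDist x C) : infDist x C = 0 := by
  have hK : (K : ℝ) < 1 := hg.1
  nlinarith [infDist_nonneg (x := x) (s := C)]

lemma ContractingWith.mem_of_isFixedPt_of_mapsTo [ProperSpace X] (hg : ContractingWith K g)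
    (hC : IsClosed C) (hCne : C.Nonempty) (hgC : MapsTo g C C) {x : X} (hx : IsFixedPt g x) :
    x ∈ C := by
  rw [hC.mem_iff_infDist_zero hCne]
  refine hg.infDist_eq_zero_of_le ?_
  simpa only [hx.eq] using hg.2.infDist_apply_le_of_mapsTo hC hgC x

lemma IsCompact.subset_of_subset_iUnion_image_of_mapsTo [ProperSpace X] {ι : Type*}
    {g : ι → X → X} {K : ι → ℝ≥0} (hg : ∀ i, ContractingWith (K i) (g i)) {L : Set X}
    (hL : IsCompact L) (hLg : L ⊆ ⋃ i, g i '' L) (hC : IsClosed C) (hCne : C.Nonempty)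
    (hgC : ∀ i, MapsTo (g i) C C) : L ⊆ C := by
  rcases L.eq_empty_or_nonempty with rfl | hLne
  · exact empty_subset C
  obtain ⟨x₀, hx₀L, hmax⟩ := hL.exists_isMaxOn hLne (continuous_infDist_pt C).continuousOn
  obtain ⟨i, x, hxL, rfl⟩ : ∃ i, ∃ x ∈ L, g i x = x₀ := by simpa using hLg hx₀L
  have hx₀ : infDist (g i x) C = 0 := (hg i).infDist_eq_zero_of_le <|
    calc infDist (g i x) C ≤ K i * infDist x C := (hg i).2.infDist_apply_le_of_mapsTo hC (hgC i) x
      _ ≤ K i * infDist (g i x) C := by gcongr; exact hmax hxL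
  intro w hwL
  rw [hC.mem_iff_infDist_zero hCne]
  exact le_antisymm (hx₀ ▸ hmax hwL) infDist_nonneg

end Contraction

lemma AffineMap.mapsTo_convexHull {𝕜 E : Type*} [Field 𝕜] [LinearOrder 𝕜]
    [IsStrictOrderedRing 𝕜] [AddCommGroup E] [Module 𝕜 E] (g : E →ᵃ[𝕜] E) {s : Set E}
    (h : MapsTo g s (convexHull 𝕜 s)) : MapsTo g (convexHull 𝕜 s) (convexHull 𝕜 s) := by
  rw [mapsTo_iff_image_subset, g.image_convexHull]
  exact convexHull_min h.image_subset (convex_convexHull 𝕜 s)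

lemma ContinuousLinearMap.lipschitzWith_add_const {𝕜 E F : Type*} [NontriviallyNormedField 𝕜]
    [SeminormedAddCommGroup E] [NormedSpace 𝕜 E] [SeminormedAddCommGroup F] [NormedSpace 𝕜 F]
    (A : E →L[𝕜] F) (b : F) : LipschitzWith ‖A‖₊ fun x => A x + b := by
  simpa using A.lipschitz.add (LipschitzWith.const b)

/-- Lemma `lem:convhull`. For contractive affine maps `f_i = A_i · + b_i`
with fixed points `z_i` and attractor `L`, if `f_j(z_i)` lies in the convex hull of the fixed
points for all `i, j`, then the convex hull of `L` is the polytope `conv{z_1, …, z_p}`. -/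
theorem stmt3 {D p : ℕ}
    (A : Fin (p + 1) → EuclideanSpace ℝ (Fin D) →L[ℝ] EuclideanSpace ℝ (Fin D))
    (b : Fin (p + 1) → EuclideanSpace ℝ (Fin D))
    (f : Fin (p + 1) → EuclideanSpace ℝ (Fin D) → EuclideanSpace ℝ (Fin D))
    (hf : ∀ i x, f i x = A i x + b i)
    (hA : ∀ i, ‖A i‖ < 1)
    (z : Fin (p + 1) → EuclideanSpace ℝ (Fin D))
    (hz : ∀ i, f i (z i) = z i)
    (L : Set (EuclideanSpace ℝ (Fin D))) (hLc : IsCompact L) (hLne : L.Nonempty)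
    (hL : hutch f L = L)
    (hconv : ∀ i j, f j (z i) ∈ convexHull ℝ (Set.range z)) :
    convexHull ℝ L = convexHull ℝ (Set.range z) := by
  set P := convexHull ℝ (Set.range z)
  have hf' : ∀ i, f i = fun x => A i x + b i := fun i => funext (hf i)
  have hcontr : ∀ i, ContractingWith ‖A i‖₊ (f i) := fun i =>
    ⟨hA i, hf' i ▸ (A i).lipschitzWith_add_const (b i)⟩
  have hfL : ∀ i, MapsTo (f i) L L := fun i x hx =>
    hL ▸ mem_iUnion_of_mem i (mem_image_of_mem _ hx)
  have hfP : ∀ i, MapsTo (f i) P P := by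
    intro i
    let F : EuclideanSpace ℝ (Fin D) →ᵃ[ℝ] EuclideanSpace ℝ (Fin D) :=
      (A i).toLinearMap.toAffineMap + AffineMap.const ℝ _ (b i)
    have hF : ⇑F = f i := funext fun x => by simp [F, hf]
    rw [← hF]
    exact F.mapsTo_convexHull (by rintro _ ⟨j, rfl⟩; rw [hF]; exact hconv j i)
  have hzL : range z ⊆ L := by
    rintro _ ⟨i, rfl⟩
    exact (hcontr i).mem_of_isFixedPt_of_mapsTo hLc.isClosed hLne (hfL i) (hz i)
  have hLP : L ⊆ P :=
    hLc.subset_of_subset_iUnion_image_of_mapsTo hcontr hL.ge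
      ((finite_range z).isCompact_convexHull (𝕜 := ℝ)).isClosed
      ⟨z 0, subset_convexHull ℝ _ ⟨0, rfl⟩⟩ hfP
  exact (convexHull_min hLP (convex_convexHull ℝ _)).antisymm (convexHull_mono hzL)
end
end

section
/- Let p ≥ 1 affine maps f_i(x) = α_i x + b_i on ℝ^D with α_i ≥ 0 (homothety linear parts), let j be an index with α_j = max_{1≤i≤p} α_i, let K_0 be a nonempty compact subset of ℝ^D, and let (d_n)_n be the normalizing sequence of the renormalized Hutchinson orbit of K_0. Then (d_n)_n converges to some d > 0. If d = α_j then b_j = 0; otherwise d ≠ α_j and: if d > α_j then d = max_{1≤i≤p}(α_i + ‖b_i‖), while if d < α_j then d = α_j − ‖b_j‖. -/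
/-!
For `n ≥ 1` the set `K n` lies in the closed unit ball and meets the unit sphere. If `d n` is
attained at `f i x`, then `f i` maps the point `(d n)⁻¹ • f i x` of `K (n + 1)` to a vector of norm
at least `d n`, because `f i (r⁻¹ • f i x) = (1 + α i / r) • f i x - α i • x` with `r = ‖f i x‖`.
So `(d n)_{n ≥ 1}` is nondecreasing; it is bounded by `max_i (α i + ‖b i‖)`, hence converges to
some `d > 0`. Following a point along `f i`, its coordinate in the direction of `b i` stays in
`[-1, 1]` while its increments tend to at least `‖b i‖ - |d - α i|`, which forces
`‖b i‖ ≤ |d - α i|` for every `i`. This gives `b j = 0` when `d = α j`, and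
`d ≥ max_i (α i + ‖b i‖)` when `d > α j`; when `d < α j` it gives `d ≤ α j - ‖b j‖`, while
`d n ≥ α j - ‖b j‖` is read off at a point of norm one.
-/

open Metric Filter Pointwise Topology

noncomputable section

lemma exists_lt_of_add_le_succ {w : ℕ → ℝ} {c : ℝ} (hc : 0 < c) (hw : ∀ k, w k + c ≤ w (k + 1))
    (M : ℝ) : ∃ k, M < w k := by
  have hlin : ∀ k : ℕ, w 0 + k * c ≤ w k := by
    intro k
    induction k with
    | zero => simp
    | succ k ih => push_cast; linarith [hw k]
  obtain ⟨k, hk⟩ := exists_nat_gt ((M - w 0) / c)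
  refine ⟨k, lt_of_lt_of_le ?_ (hlin k)⟩
  rw [div_lt_iff₀ hc] at hk
  linarith

/-- If `c > |L - a|`, then `w` gains a fixed positive amount at every late step. -/
lemma le_abs_sub_of_tendsto_of_mul_succ_eq {w d : ℕ → ℝ} {a c L : ℝ}
    (hd : Tendsto d atTop (𝓝 L)) (hL : 0 < L) (hw : ∀ᶠ k in atTop, |w k| ≤ 1)
    (hrec : ∀ k, d k * w (k + 1) = a * w k + c) : c ≤ |L - a| := by
  by_contra! hlt
  set g := c - |L - a|
  have hg0 : 0 < g := sub_pos.2 hlt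
  have hclose : ∀ᶠ k in atTop, |d k - L| < g / 2 :=
    (Metric.tendsto_nhds.1 hd) (g / 2) (by positivity)
  have hsmall : ∀ᶠ k in atTop, d k < 2 * L := hd.eventually (gt_mem_nhds (by linarith))
  have hdpos : ∀ᶠ k in atTop, 0 < d k := hd.eventually (lt_mem_nhds hL)
  have hstep : ∀ᶠ k in atTop, w k + g / (4 * L) ≤ w (k + 1) := by
    filter_upwards [hclose, hsmall, hdpos, hw] with k hk hk2 hdk hwk
    have hinc : g / 2 ≤ d k * (w (k + 1) - w k) := by
      have h1 : |(a - d k) * w k| ≤ |a - d k| := by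
        rw [abs_mul]
        exact mul_le_of_le_one_right (abs_nonneg _) hwk
      have h2 : |a - d k| ≤ |L - a| + |d k - L| := by
        rw [abs_sub_comm L, abs_sub_comm (d k)]
        exact abs_sub_le a L (d k)
      have h3 : d k * (w (k + 1) - w k) = (a - d k) * w k + c := by rw [mul_sub, hrec k]; ring
      linarith [neg_abs_le ((a - d k) * w k)]
    have hgd : g / (4 * L) * d k ≤ g / 2 := by
      rw [div_mul_eq_mul_div, div_le_iff₀ (by positivity)]
      nlinarith
    linarith [le_of_mul_le_mul_right (hgd.trans (hinc.trans_eq (mul_comm _ _))) hdk]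
  obtain ⟨N, hN⟩ := eventually_atTop.1 (hstep.and hw)
  obtain ⟨k, hk⟩ := exists_lt_of_add_le_succ (w := fun k ↦ w (N + k)) (by positivity)
    (fun k ↦ (hN (N + k) (by omega)).1) 1
  linarith [le_abs_self (w (N + k)), (hN (N + k) (by omega)).2]

lemma norm_le_norm_apply_inv_norm_smul_apply {E : Type*} [NormedAddCommGroup E] [NormedSpace ℝ E]
    {g : E → E} {a : ℝ} {b x : E} (hg : ∀ y, g y = a • y + b) (ha : 0 ≤ a) (hx : ‖x‖ ≤ 1)
    (hgx : g x ≠ 0) : ‖g x‖ ≤ ‖g (‖g x‖⁻¹ • g x)‖ := by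
  set r := ‖g x‖
  have hr : 0 < r := norm_pos_iff.2 hgx
  have hexp : g (r⁻¹ • g x) = (1 + a / r) • g x - a • x := by
    rw [hg (r⁻¹ • g x), smul_smul, hg x, add_smul, one_smul, div_eq_mul_inv]
    abel
  calc r = (1 + a / r) * r - a * 1 := by field_simp; ring
    _ ≤ ‖(1 + a / r) • g x‖ - ‖a • x‖ := by
      rw [norm_smul, norm_smul, Real.norm_of_nonneg (by positivity), Real.norm_of_nonneg ha]
      gcongr
    _ ≤ ‖g (r⁻¹ • g x)‖ := by rw [hexp]; exact norm_sub_norm_le _ _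

namespace HutchinsonOrbit

variable {D p : ℕ}

lemma norm_le_rad {K : Set (EuclideanSpace ℝ (Fin D))} (hK : IsCompact K)
    {x : EuclideanSpace ℝ (Fin D)} (hx : x ∈ K) : ‖x‖ ≤ rad K :=
  le_csSup (hK.image continuous_norm).bddAbove ⟨x, hx, rfl⟩

lemma exists_norm_eq_rad {K : Set (EuclideanSpace ℝ (Fin D))} (hK : IsCompact K)
    (hne : K.Nonempty) : ∃ x ∈ K, ‖x‖ = rad K :=
  (hK.image continuous_norm).sSup_mem (hne.image _)

lemma rad_le {K : Set (EuclideanSpace ℝ (Fin D))} (hne : K.Nonempty) {C : ℝ}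
    (h : ∀ x ∈ K, ‖x‖ ≤ C) : rad K ≤ C :=
  csSup_le (hne.image _) (Set.forall_mem_image.2 h)

variable {f : Fin (p + 1) → EuclideanSpace ℝ (Fin D) → EuclideanSpace ℝ (Fin D)}

lemma mem_hutch {K : Set (EuclideanSpace ℝ (Fin D))} (i : Fin (p + 1))
    {x : EuclideanSpace ℝ (Fin D)} (hx : x ∈ K) : f i x ∈ hutch f K :=
  Set.mem_iUnion.2 ⟨i, Set.mem_image_of_mem _ hx⟩

lemma isCompact_hutch (hf : ∀ i, Continuous (f i)) {K : Set (EuclideanSpace ℝ (Fin D))}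
    (hK : IsCompact K) : IsCompact (hutch f K) :=
  isCompact_iUnion fun i ↦ hK.image (hf i)

lemma hutch_nonempty {K : Set (EuclideanSpace ℝ (Fin D))} (hK : K.Nonempty) :
    (hutch f K).Nonempty :=
  let ⟨x, hx⟩ := hK
  ⟨f 0 x, mem_hutch 0 hx⟩

def orbit (f : Fin (p + 1) → EuclideanSpace ℝ (Fin D) → EuclideanSpace ℝ (Fin D))
    (K₀ : Set (EuclideanSpace ℝ (Fin D))) (n : ℕ) : Set (EuclideanSpace ℝ (Fin D)) :=
  (hutchRho f)^[n] K₀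

def normSeq (f : Fin (p + 1) → EuclideanSpace ℝ (Fin D) → EuclideanSpace ℝ (Fin D))
    (K₀ : Set (EuclideanSpace ℝ (Fin D))) (n : ℕ) : ℝ :=
  rad (hutch f (orbit f K₀ n))

variable {K₀ : Set (EuclideanSpace ℝ (Fin D))}

lemma orbit_succ (n : ℕ) :
    orbit f K₀ (n + 1) = (normSeq f K₀ n)⁻¹ • hutch f (orbit f K₀ n) :=
  Function.iterate_succ_apply' _ _ _

lemma isCompact_orbit (hf : ∀ i, Continuous (f i)) (hK₀ : IsCompact K₀) (n : ℕ) :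
    IsCompact (orbit f K₀ n) := by
  induction n with
  | zero => exact hK₀
  | succ n ih => rw [orbit_succ]; exact (isCompact_hutch hf ih).smul _

lemma orbit_nonempty (hK₀ : K₀.Nonempty) (n : ℕ) : (orbit f K₀ n).Nonempty := by
  induction n with
  | zero => exact hK₀
  | succ n ih => rw [orbit_succ]; exact (hutch_nonempty ih).smul_set

lemma inv_normSeq_smul_mem_orbit {n : ℕ} {x : EuclideanSpace ℝ (Fin D)} (hx : x ∈ orbit f K₀ n)
    (i : Fin (p + 1)) : (normSeq f K₀ n)⁻¹ • f i x ∈ orbit f K₀ (n + 1) := by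
  rw [orbit_succ]
  exact Set.smul_mem_smul_set (mem_hutch i hx)

section Compact

variable (hf : ∀ i, Continuous (f i)) (hK₀ : IsCompact K₀)
include hf hK₀

lemma norm_apply_le_normSeq {n : ℕ} {x : EuclideanSpace ℝ (Fin D)} (hx : x ∈ orbit f K₀ n)
    (i : Fin (p + 1)) : ‖f i x‖ ≤ normSeq f K₀ n :=
  norm_le_rad (isCompact_hutch hf (isCompact_orbit hf hK₀ n)) (mem_hutch i hx)

lemma exists_norm_apply_eq_normSeq (hK₀ne : K₀.Nonempty) (n : ℕ) :
    ∃ i, ∃ x ∈ orbit f K₀ n, ‖f i x‖ = normSeq f K₀ n := by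
  obtain ⟨y, hy, hyn⟩ := exists_norm_eq_rad (isCompact_hutch hf (isCompact_orbit hf hK₀ n))
    (hutch_nonempty (orbit_nonempty hK₀ne n))
  obtain ⟨i, x, hx, rfl⟩ := Set.mem_iUnion.1 hy
  exact ⟨i, x, hx, hyn⟩

lemma norm_le_one_of_mem_orbit_succ (hpos : ∀ n, 0 < normSeq f K₀ n) {n : ℕ}
    {x : EuclideanSpace ℝ (Fin D)} (hx : x ∈ orbit f K₀ (n + 1)) : ‖x‖ ≤ 1 := by
  rw [orbit_succ] at hx
  obtain ⟨y, hy, rfl⟩ := hx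
  rw [norm_smul, norm_inv, Real.norm_of_nonneg (hpos n).le]
  exact inv_mul_le_one_of_le₀ (norm_le_rad (isCompact_hutch hf (isCompact_orbit hf hK₀ n)) hy)
    (hpos n).le

lemma exists_norm_eq_one_of_mem_orbit_succ (hK₀ne : K₀.Nonempty)
    (hpos : ∀ n, 0 < normSeq f K₀ n) (n : ℕ) : ∃ x ∈ orbit f K₀ (n + 1), ‖x‖ = 1 := by
  obtain ⟨i, x, hx, hxn⟩ := exists_norm_apply_eq_normSeq hf hK₀ hK₀ne n
  refine ⟨_, inv_normSeq_smul_mem_orbit hx i, ?_⟩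
  rw [norm_smul, norm_inv, hxn, Real.norm_of_nonneg (hpos n).le, inv_mul_cancel₀ (hpos n).ne']

end Compact

def orbitTraj (f : Fin (p + 1) → EuclideanSpace ℝ (Fin D) → EuclideanSpace ℝ (Fin D))
    (K₀ : Set (EuclideanSpace ℝ (Fin D))) (i : Fin (p + 1)) (x₀ : EuclideanSpace ℝ (Fin D)) :
    ℕ → EuclideanSpace ℝ (Fin D)
  | 0 => x₀
  | n + 1 => (normSeq f K₀ n)⁻¹ • f i (orbitTraj f K₀ i x₀ n)

lemma orbitTraj_mem_orbit (i : Fin (p + 1)) {x₀ : EuclideanSpace ℝ (Fin D)} (hx₀ : x₀ ∈ K₀)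
    (n : ℕ) : orbitTraj f K₀ i x₀ n ∈ orbit f K₀ n := by
  induction n with
  | zero => exact hx₀
  | succ n ih => exact inv_normSeq_smul_mem_orbit ih i

section Homothety

variable {α : Fin (p + 1) → ℝ} {b : Fin (p + 1) → EuclideanSpace ℝ (Fin D)}
  (hf : ∀ i x, f i x = α i • x + b i)
  (hfc : ∀ i, Continuous (f i)) (hK₀ : IsCompact K₀) (hK₀ne : K₀.Nonempty)
  (hpos : ∀ n, 0 < normSeq f K₀ n)
include hf hfc hK₀ hK₀ne hpos

lemma monotone_normSeq_succ (hα : ∀ i, 0 ≤ α i) : Monotone fun n ↦ normSeq f K₀ (n + 1) := by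
  refine monotone_nat_of_le_succ fun n ↦ ?_
  obtain ⟨i, x, hx, hxn⟩ := exists_norm_apply_eq_normSeq hfc hK₀ hK₀ne (n + 1)
  have hfx : f i x ≠ 0 := norm_pos_iff.1 (hxn ▸ hpos (n + 1))
  calc normSeq f K₀ (n + 1) = ‖f i x‖ := hxn.symm
    _ ≤ ‖f i (‖f i x‖⁻¹ • f i x)‖ := norm_le_norm_apply_inv_norm_smul_apply (hf i) (hα i)
        (norm_le_one_of_mem_orbit_succ hfc hK₀ hpos hx) hfx
    _ ≤ normSeq f K₀ (n + 2) := by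
        rw [hxn]
        exact norm_apply_le_normSeq hfc hK₀ (inv_normSeq_smul_mem_orbit hx i) i

lemma normSeq_succ_le (hα : ∀ i, 0 ≤ α i) {C : ℝ} (hC : ∀ i, α i + ‖b i‖ ≤ C) (n : ℕ) :
    normSeq f K₀ (n + 1) ≤ C := by
  refine rad_le (hutch_nonempty (orbit_nonempty hK₀ne _)) fun y hy ↦ ?_
  obtain ⟨i, x, hx, rfl⟩ := Set.mem_iUnion.1 hy
  calc ‖f i x‖ ≤ ‖α i • x‖ + ‖b i‖ := by rw [hf]; exact norm_add_le _ _
    _ = α i * ‖x‖ + ‖b i‖ := by rw [norm_smul, Real.norm_of_nonneg (hα i)]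
    _ ≤ α i + ‖b i‖ := by
        gcongr
        exact mul_le_of_le_one_right (hα i) (norm_le_one_of_mem_orbit_succ hfc hK₀ hpos hx)
    _ ≤ C := hC i

lemma sub_norm_le_normSeq_succ (i : Fin (p + 1)) (n : ℕ) :
    α i - ‖b i‖ ≤ normSeq f K₀ (n + 1) := by
  obtain ⟨x, hx, hx1⟩ := exists_norm_eq_one_of_mem_orbit_succ hfc hK₀ hK₀ne hpos n
  calc α i - ‖b i‖ ≤ ‖α i • x‖ - ‖b i‖ := by
        rw [norm_smul, hx1, mul_one]
        exact sub_le_sub_right (le_abs_self _) _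
    _ ≤ ‖f i x‖ := by rw [hf]; exact norm_sub_le_norm_add _ _
    _ ≤ normSeq f K₀ (n + 1) := norm_apply_le_normSeq hfc hK₀ hx i

lemma exists_tendsto_normSeq (hα : ∀ i, 0 ≤ α i) :
    ∃ L, 0 < L ∧ Tendsto (normSeq f K₀) atTop (𝓝 L) := by
  have hmono := monotone_normSeq_succ hf hfc hK₀ hK₀ne hpos hα
  have hbdd : BddAbove (Set.range fun n ↦ normSeq f K₀ (n + 1)) :=
    ⟨Finset.univ.sup' Finset.univ_nonempty fun i ↦ α i + ‖b i‖, Set.forall_mem_range.2 <|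
      normSeq_succ_le hf hfc hK₀ hK₀ne hpos hα fun i ↦
        Finset.le_sup' (fun i ↦ α i + ‖b i‖) (Finset.mem_univ i)⟩
  have hlim := tendsto_atTop_ciSup hmono hbdd
  exact ⟨_, (hpos 1).trans_le (hmono.ge_of_tendsto hlim 0),
    (tendsto_add_atTop_iff_nat 1).1 hlim⟩

lemma norm_le_abs_sub_of_tendsto {L : ℝ} (hL : Tendsto (normSeq f K₀) atTop (𝓝 L)) (hL0 : 0 < L)
    (i : Fin (p + 1)) : ‖b i‖ ≤ |L - α i| := by
  obtain ⟨x₀, hx₀⟩ := hK₀ne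
  set u := ‖b i‖⁻¹ • b i
  have hu : ‖u‖ ≤ 1 := by
    rw [norm_smul, norm_inv, norm_norm]
    exact inv_mul_le_one
  set w : ℕ → ℝ := fun n ↦ inner ℝ (orbitTraj f K₀ i x₀ n) u
  refine le_abs_sub_of_tendsto_of_mul_succ_eq (w := w) hL hL0 ?_ fun n ↦ ?_
  · refine eventually_atTop.2 ⟨1, fun n hn ↦ ?_⟩
    obtain ⟨n, rfl⟩ := Nat.exists_eq_add_of_le' hn
    have hx := norm_le_one_of_mem_orbit_succ hfc hK₀ hpos (orbitTraj_mem_orbit i hx₀ (n + 1))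
    calc |w (n + 1)| ≤ ‖orbitTraj f K₀ i x₀ (n + 1)‖ * ‖u‖ := abs_real_inner_le_norm _ _
      _ ≤ 1 := mul_le_one₀ hx (norm_nonneg _) hu
  · have hbu : inner ℝ (b i) u = ‖b i‖ := by
      rw [real_inner_smul_right, real_inner_self_eq_norm_mul_norm, ← mul_assoc, inv_mul_mul_self]
    simp only [w, orbitTraj]
    rw [← real_inner_smul_left, smul_inv_smul₀ (hpos n).ne', hf, inner_add_left,
      real_inner_smul_left, hbu]

end Homothety

end HutchinsonOrbit

open HutchinsonOrbit in
/-- Lemma `lem:limefhid`. For an IFS of homotheties `f_i(x) = α_i x + b_i`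
(`α_i ≥ 0`), with `α_j = max_i α_i`, the sequence `(d_n)` converges to some `d > 0`; if
`d = α_j` then `b_j = 0`, if `d > α_j` then `d = max_i (α_i + ‖b_i‖)`, and if `d < α_j` then
`d = α_j − ‖b_j‖`. -/
theorem stmt5 {D p : ℕ}
    (α : Fin (p + 1) → ℝ) (hα : ∀ i, 0 ≤ α i)
    (b : Fin (p + 1) → EuclideanSpace ℝ (Fin D))
    (f : Fin (p + 1) → EuclideanSpace ℝ (Fin D) → EuclideanSpace ℝ (Fin D))
    (hf : ∀ i x, f i x = α i • x + b i)
    (j : Fin (p + 1)) (hj : α j = Finset.univ.sup' Finset.univ_nonempty α)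
    (K₀ : Set (EuclideanSpace ℝ (Fin D))) (hK₀c : IsCompact K₀) (hK₀ne : K₀.Nonempty)
    (hpos : ∀ n, 0 < rad (hutch f ((hutchRho f)^[n] K₀))) :
    ∃ d : ℝ, 0 < d ∧
      Tendsto (fun n => rad (hutch f ((hutchRho f)^[n] K₀))) atTop (𝓝 d) ∧
      (d = α j → b j = 0) ∧
      (α j < d → d = Finset.univ.sup' Finset.univ_nonempty (fun i => α i + ‖b i‖)) ∧
      (d < α j → d = α j - ‖b j‖) := by
  have hfc : ∀ i, Continuous (f i) := fun i ↦ by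
    simp only [funext (hf i)]
    fun_prop
  obtain ⟨d, hd0, hd⟩ := exists_tendsto_normSeq hf hfc hK₀c hK₀ne hpos hα
  have hd₁ : Tendsto (fun n ↦ normSeq f K₀ (n + 1)) atTop (𝓝 d) :=
    (tendsto_add_atTop_iff_nat 1).2 hd
  have hb (i) : ‖b i‖ ≤ |d - α i| := norm_le_abs_sub_of_tendsto hf hfc hK₀c hK₀ne hpos hd hd0 i
  have hαj (i) : α i ≤ α j := hj ▸ Finset.le_sup' α (Finset.mem_univ i)
  refine ⟨d, hd0, hd, fun hdj ↦ ?_, fun hdj ↦ ?_, fun hdj ↦ ?_⟩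
  · simpa [hdj] using hb j
  · refine le_antisymm (le_of_tendsto' hd₁ (normSeq_succ_le hf hfc hK₀c hK₀ne hpos hα
      fun i ↦ Finset.le_sup' (fun i ↦ α i + ‖b i‖) (Finset.mem_univ i)))
      (Finset.sup'_le _ _ fun i _ ↦ ?_)
    have hbi := hb i
    rw [abs_of_pos (by linarith [hαj i])] at hbi
    linarith
  · refine le_antisymm ?_ (ge_of_tendsto' hd₁ (sub_norm_le_normSeq_succ hf hfc hK₀c hK₀ne hpos j))
    have hbj := hb j
    rw [abs_of_neg (by linarith)] at hbj
    linarith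
end
end

section
/- Let p ≥ 1 linear maps f_i : ℝ² → ℝ² of the form f_i(x) = A_i x where each A_i is a positive stochastic 2×2 matrix (all entries positive, each row summing to 1). Then for every nonempty compact K_0 ⊆ ℝ², the sequence (H^n(K_0))_n converges in the Hausdorff metric to a set of the form L = cl(⋃_{v_0 ∈ K_0} {(x,x) : x ∈ h_{v_0}(Γ)}), where each h_{v_0} : ℝ → ℝ is an affine map depending on v_0 and on the f_i, and Γ is the attractor of a contractive IFS {g_1,…,g_p} of affine maps g_i : ℝ → ℝ depending only on the f_i. (Formally: there exist affine contractions g_1,…,g_p on ℝ with attractor Γ and an assignment v_0 ↦ h_{v_0} of affine maps on ℝ such that the stated convergence holds.) -/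
/-!
A stochastic `A_i` fixes the diagonal pointwise and multiplies `x₀ - x₁` by its second
eigenvalue `c_i = A_i 1 1 - A_i 0 1`, and positivity gives `|c_i| < 1`. Relative to a
starting point `v`, describe a point `u` by an affine map `φ t = β + σ t` of `ℝ` through
`u_k = v₀ + (v₁ - v₀) φ(k)`, `k = 0, 1`. Applying `f_i` replaces `φ` by `φ ∘ g_i`, where
`g_i t = c_i t + A_i 0 1`. So the points of `Hⁿ(K₀)` come from `v ∈ K₀` and
`φ = g_{w₁} ∘ ⋯ ∘ g_{wₙ}`, whose slope is at most `rⁿ` with `r = max |c_i| < 1`. Such a `φ`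
maps the attractor `Γ` of the `g_i` into itself, and the images of `Γ` under these `φ` cover
`Γ`. Since `u` differs from the diagonal point `(v₀ + (v₁ - v₀) φ(γ))(1, 1)` by
`O(|σ| (1 + |γ|))`, the Hausdorff distance from `Hⁿ(K₀)` to the limit set is `O(rⁿ)`.
-/

open Metric Filter Pointwise Topology

noncomputable section

def diagPt (x : ℝ) : EuclideanSpace ℝ (Fin 2) := (EuclideanSpace.equiv (Fin 2) ℝ).symm ![x, x]

open scoped NNReal

theorem Matrix.toEuclideanLin_apply_of_rowSum_eq_one {A : Matrix (Fin 2) (Fin 2) ℝ}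
    (hA : ∀ k, A k 0 + A k 1 = 1) (x : EuclideanSpace ℝ (Fin 2)) (k : Fin 2) :
    A.toEuclideanLin x k = x 0 + A k 1 * (x 1 - x 0) := by
  have : A k 0 = 1 - A k 1 := by linarith [hA k]
  simp only [Matrix.toEuclideanLin, Matrix.ofLp_toLpLin, Matrix.toLin'_apply, Matrix.mulVec,
    dotProduct, Fin.sum_univ_two, this]
  ring

theorem Matrix.abs_sub_lt_one_of_pos_of_rowSum_eq_one {A : Matrix (Fin 2) (Fin 2) ℝ}
    (hpos : ∀ k l, 0 < A k l) (hA : ∀ k, A k 0 + A k 1 = 1) : |A 1 1 - A 0 1| < 1 := by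
  have := hpos 0 0; have := hpos 0 1; have := hpos 1 0; have := hpos 1 1
  have := hA 0; have := hA 1
  rw [abs_lt]; constructor <;> linarith

theorem lipschitzWith_mul_add (c b : ℝ) : LipschitzWith ‖c‖₊ fun x : ℝ => c * x + b :=
  LipschitzWith.of_dist_le_mul fun x y => by
    rw [Real.dist_eq, Real.dist_eq, coe_nnnorm, Real.norm_eq_abs, ← abs_mul]; ring_nf; rfl

theorem LipschitzWith.infEDist_image_le {α β : Type*} [PseudoEMetricSpace α]
    [PseudoEMetricSpace β] {K : ℝ≥0} {f : α → β} (hf : LipschitzWith K f) (x : α) {s : Set α}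
    (hs : s.Nonempty) : infEDist (f x) (f '' s) ≤ K * infEDist x s := by
  have := hs.to_subtype
  rw [infEDist, infEDist, iInf_image, iInf_subtype', iInf_subtype',
    ENNReal.mul_iInf (by simp)]
  exact iInf_mono fun y => hf _ _

theorem LipschitzWith.hausdorffEDist_image_le {α β : Type*} [PseudoEMetricSpace α]
    [PseudoEMetricSpace β] {K : ℝ≥0} {f : α → β} (hf : LipschitzWith K f) {s t : Set α}
    (hs : s.Nonempty) (ht : t.Nonempty) :
    hausdorffEDist (f '' s) (f '' t) ≤ K * hausdorffEDist s t := by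
  refine hausdorffEDist_le_of_infEDist ?_ ?_
  · rintro _ ⟨x, hx, rfl⟩
    exact (hf.infEDist_image_le x ht).trans
      (by gcongr; exact infEDist_le_hausdorffEDist_of_mem hx)
  · rintro _ ⟨y, hy, rfl⟩
    rw [hausdorffEDist_comm]
    exact (hf.infEDist_image_le y hs).trans
      (by gcongr; exact infEDist_le_hausdorffEDist_of_mem hy)

open TopologicalSpace in
theorem exists_isCompact_nonempty_iUnion_image_eq {α ι : Type*} [MetricSpace α]
    [CompleteSpace α] [Nonempty α] [Finite ι] [Nonempty ι] {K : ℝ≥0} {g : ι → α → α}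
    (hK : K < 1) (hg : ∀ i, LipschitzWith K (g i)) :
    ∃ Γ : Set α, IsCompact Γ ∧ Γ.Nonempty ∧ ⋃ i, g i '' Γ = Γ := by
  let T : NonemptyCompacts α → NonemptyCompacts α := fun s =>
    ⟨⟨⋃ i, g i '' s, isCompact_iUnion fun i => s.isCompact.image (hg i).continuous⟩,
      (s.nonempty.image (g (Classical.arbitrary ι))).mono (Set.subset_iUnion_of_subset _ le_rfl)⟩
  have hT : ContractingWith K T := ⟨hK, fun s t => hausdorffEDist_iUnion_le.trans <|
    iSup_le fun i => (hg i).hausdorffEDist_image_le s.nonempty t.nonempty⟩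
  exact ⟨_, (ContractingWith.fixedPoint T hT).isCompact,
    (ContractingWith.fixedPoint T hT).nonempty, congrArg SetLike.coe hT.fixedPoint_isFixedPt⟩

theorem EuclideanSpace.dist_le_abs_add_abs (x y : EuclideanSpace ℝ (Fin 2)) :
    dist x y ≤ |x 0 - y 0| + |x 1 - y 1| := by
  rw [EuclideanSpace.dist_eq, Fin.sum_univ_two, Real.sqrt_le_iff, Real.dist_eq, Real.dist_eq]
  refine ⟨by positivity, ?_⟩
  nlinarith [sq_abs (x 0 - y 0), sq_abs (x 1 - y 1), abs_nonneg (x 0 - y 0),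
    abs_nonneg (x 1 - y 1)]

def AffineCoords (v : EuclideanSpace ℝ (Fin 2)) (β σ : ℝ) (u : EuclideanSpace ℝ (Fin 2)) :
    Prop :=
  u 0 = v 0 + (v 1 - v 0) * β ∧ u 1 = v 0 + (v 1 - v 0) * (β + σ)

namespace AffineCoords

variable {v u : EuclideanSpace ℝ (Fin 2)} {β σ : ℝ}

theorem refl (v : EuclideanSpace ℝ (Fin 2)) : AffineCoords v 0 1 v :=
  ⟨by ring, by ring⟩

/-- In terms of `φ t = β + σ t`, this is `φ ↦ φ ∘ (t ↦ (a 1 - a 0) * t + a 0)`. -/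
theorem apply {a : Fin 2 → ℝ} {F : EuclideanSpace ℝ (Fin 2) → EuclideanSpace ℝ (Fin 2)}
    (hF : ∀ x k, F x k = x 0 + a k * (x 1 - x 0)) (h : AffineCoords v β σ u) :
    AffineCoords v (β + σ * a 0) (σ * (a 1 - a 0)) (F u) := by
  obtain ⟨h0, h1⟩ := h
  constructor <;> rw [hF, h0, h1] <;> ring

theorem dist_diagPt_le (h : AffineCoords v β σ u) (γ : ℝ) :
    dist u (diagPt ((v 1 - v 0) * (β + σ * γ) + v 0)) ≤ |v 1 - v 0| * |σ| * (2 * |γ| + 1) := by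
  obtain ⟨h0, h1⟩ := h
  have hdiag : ∀ x k, diagPt x k = x := fun x k => by fin_cases k <;> rfl
  refine (EuclideanSpace.dist_le_abs_add_abs _ _).trans ?_
  rw [hdiag, hdiag, h0, h1]
  calc _ = |-((v 1 - v 0) * σ * γ)| + |(v 1 - v 0) * σ * (1 - γ)| := by congr 1 <;> ring_nf
    _ = |v 1 - v 0| * |σ| * (|γ| + |1 - γ|) := by simp only [abs_neg, abs_mul]; ring
    _ ≤ |v 1 - v 0| * |σ| * (2 * |γ| + 1) := by
        gcongr _ * ?_
        linarith [abs_sub 1 γ, abs_one (α := ℝ)]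

end AffineCoords

section Orbit

open Set

variable {p : ℕ} {a : Fin (p + 1) → Fin 2 → ℝ}
  {f : Fin (p + 1) → EuclideanSpace ℝ (Fin 2) → EuclideanSpace ℝ (Fin 2)}
  {K : Set (EuclideanSpace ℝ (Fin 2))} {Γ : Set ℝ} {r : ℝ}

theorem exists_affineCoords_of_mem_hutch_iterate
    (hf : ∀ i x k, f i x k = x 0 + a i k * (x 1 - x 0))
    (hΓ : ∀ i, MapsTo (fun t => (a i 1 - a i 0) * t + a i 0) Γ Γ)
    (hr : ∀ i, |a i 1 - a i 0| ≤ r) (n : ℕ) :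
    ∀ u ∈ (hutch f)^[n] K, ∃ v ∈ K, ∃ β σ : ℝ,
      |σ| ≤ r ^ n ∧ MapsTo (fun t => β + σ * t) Γ Γ ∧ AffineCoords v β σ u := by
  induction n with
  | zero => exact fun u hu => ⟨u, hu, 0, 1, by simp, fun t ht => by simpa, .refl u⟩
  | succ n ih =>
    intro u hu
    rw [Function.iterate_succ_apply'] at hu
    simp only [hutch, mem_iUnion, mem_image] at hu
    obtain ⟨i, u, hu, rfl⟩ := hu
    obtain ⟨v, hv, β, σ, hσ, hφ, hu⟩ := ih u hu
    refine ⟨v, hv, β + σ * a i 0, σ * (a i 1 - a i 0), ?_, ?_, hu.apply (hf i)⟩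
    · rw [abs_mul, pow_succ]
      exact mul_le_mul hσ (hr i) (abs_nonneg _) ((abs_nonneg _).trans hσ)
    · convert hφ.comp (hΓ i) using 1
      funext t
      simp only [Function.comp_apply]
      ring

theorem exists_mem_hutch_iterate_affineCoords
    (hf : ∀ i x k, f i x k = x 0 + a i k * (x 1 - x 0))
    (hΓ : Γ ⊆ ⋃ i, (fun t => (a i 1 - a i 0) * t + a i 0) '' Γ)
    (hr : ∀ i, |a i 1 - a i 0| ≤ r) (n : ℕ) {v : EuclideanSpace ℝ (Fin 2)} (hv : v ∈ K) :
    ∀ t ∈ Γ, ∃ u ∈ (hutch f)^[n] K, ∃ β σ γ : ℝ,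
      |σ| ≤ r ^ n ∧ γ ∈ Γ ∧ t = β + σ * γ ∧ AffineCoords v β σ u := by
  induction n with
  | zero => exact fun t ht => ⟨v, hv, 0, 1, t, by simp, ht, by ring, .refl v⟩
  | succ n ih =>
    intro t ht
    obtain ⟨u, hu, β, σ, γ, hσ, hγ, rfl, hcoord⟩ := ih t ht
    obtain ⟨i, γ', hγ', rfl⟩ : ∃ i, ∃ γ' ∈ Γ, (a i 1 - a i 0) * γ' + a i 0 = γ := by
      simpa only [mem_iUnion, mem_image] using hΓ hγ
    refine ⟨f i u, ?_, β + σ * a i 0, σ * (a i 1 - a i 0), γ', ?_, hγ', by ring,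
      hcoord.apply (hf i)⟩
    · rw [Function.iterate_succ_apply']
      exact mem_iUnion_of_mem i (mem_image_of_mem _ hu)
    · rw [abs_mul, pow_succ]
      exact mul_le_mul hσ (hr i) (abs_nonneg _) ((abs_nonneg _).trans hσ)

theorem hausdorffDist_hutch_iterate_le
    (hf : ∀ i x k, f i x k = x 0 + a i k * (x 1 - x 0))
    (hΓ : ⋃ i, (fun t => (a i 1 - a i 0) * t + a i 0) '' Γ = Γ)
    (hr : ∀ i, |a i 1 - a i 0| ≤ r) (hK : K.Nonempty) (hΓne : Γ.Nonempty) {M R : ℝ}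
    (hM : ∀ v ∈ K, |v 1 - v 0| ≤ M) (hR : ∀ γ ∈ Γ, |γ| ≤ R) (n : ℕ) :
    hausdorffDist ((hutch f)^[n] K) (⋃ v ∈ K, (fun t => diagPt ((v 1 - v 0) * t + v 0)) '' Γ)
      ≤ M * (2 * R + 1) * r ^ n := by
  obtain ⟨v₀, hv₀⟩ := hK
  obtain ⟨γ₀, hγ₀⟩ := hΓne
  have hM0 : 0 ≤ M := (abs_nonneg _).trans (hM v₀ hv₀)
  have hR0 : 0 ≤ R := (abs_nonneg _).trans (hR γ₀ hγ₀)
  have hr0 : 0 ≤ r := (abs_nonneg _).trans (hr 0)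
  have hclose : ∀ {u v β σ}, v ∈ K → |σ| ≤ r ^ n → AffineCoords v β σ u → ∀ γ ∈ Γ,
      dist u (diagPt ((v 1 - v 0) * (β + σ * γ) + v 0)) ≤ M * (2 * R + 1) * r ^ n := by
    intro u v β σ hv hσ hu γ hγ
    refine (hu.dist_diagPt_le γ).trans ?_
    have := hR γ hγ
    calc |v 1 - v 0| * |σ| * (2 * |γ| + 1) ≤ M * r ^ n * (2 * R + 1) := by
          gcongr
          exact hM v hv
      _ = M * (2 * R + 1) * r ^ n := by ring
  refine hausdorffDist_le_of_mem_dist (by positivity) (fun u hu => ?_) ?_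
  · obtain ⟨v, hv, β, σ, hσ, hφ, hu⟩ := exists_affineCoords_of_mem_hutch_iterate hf
      (fun i γ hγ => hΓ ▸ mem_iUnion_of_mem i (mem_image_of_mem _ hγ)) hr n u hu
    exact ⟨_, mem_biUnion hv (mem_image_of_mem _ (hφ hγ₀)), hclose hv hσ hu γ₀ hγ₀⟩
  · simp only [mem_iUnion, mem_image]
    rintro _ ⟨v, hv, t, ht, rfl⟩
    obtain ⟨u, hu, β, σ, γ, hσ, hγ, rfl, hcoord⟩ :=
      exists_mem_hutch_iterate_affineCoords hf hΓ.ge hr n hv t ht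
    exact ⟨u, hu, dist_comm u _ ▸ hclose hv hσ hcoord γ hγ⟩

end Orbit

/-- Proposition `prop:limstoc2`. For linear maps of `ℝ²` given by positive
stochastic matrices `A_i`, the orbit `(H^n(K₀))_n` of every nonempty compact `K₀` converges in
the Hausdorff metric to a set `L = cl(⋃_{v₀ ∈ K₀} {(x,x) : x ∈ h_{v₀}(Γ)})`, where the
`h_{v₀}` are affine maps of `ℝ` and `Γ` is the attractor of a contractive affine IFS
`{g_1, …, g_p}` on `ℝ` depending only on the `f_i`. -/
theorem stmt10 {p : ℕ}
    (A : Fin (p + 1) → Matrix (Fin 2) (Fin 2) ℝ)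
    (hApos : ∀ i k l, 0 < A i k l)
    (hAstoch : ∀ i k, A i k 0 + A i k 1 = 1)
    (f : Fin (p + 1) → EuclideanSpace ℝ (Fin 2) → EuclideanSpace ℝ (Fin 2))
    (hf : ∀ i x, f i x = Matrix.toEuclideanLin (A i) x)
    (K₀ : Set (EuclideanSpace ℝ (Fin 2))) (hK₀c : IsCompact K₀) (hK₀ne : K₀.Nonempty) :
    ∃ (gc gb : Fin (p + 1) → ℝ), (∀ i, |gc i| < 1) ∧
    ∃ Γ : Set ℝ, IsCompact Γ ∧ Γ.Nonempty ∧
      (⋃ i, (fun x => gc i * x + gb i) '' Γ) = Γ ∧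
    ∃ hc hb : EuclideanSpace ℝ (Fin 2) → ℝ,
      Tendsto (fun n => hausdorffDist ((hutch f)^[n] K₀)
        (closure (⋃ v₀ ∈ K₀, (fun t : ℝ => diagPt (hc v₀ * t + hb v₀)) '' Γ)))
        atTop (𝓝 0) := by
  have hfA : ∀ i x k, f i x k = x 0 + A i k 1 * (x 1 - x 0) := fun i x k => by
    rw [hf]
    exact (A i).toEuclideanLin_apply_of_rowSum_eq_one (hAstoch i) x k
  set c : Fin (p + 1) → ℝ := fun i => A i 1 1 - A i 0 1
  have hc : ∀ i, |c i| < 1 := fun i =>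
    (A i).abs_sub_lt_one_of_pos_of_rowSum_eq_one (hApos i) (hAstoch i)
  set r : ℝ≥0 := Finset.univ.sup fun i => ‖c i‖₊
  have hcr : ∀ i, ‖c i‖₊ ≤ r := fun i => Finset.le_sup (f := fun i => ‖c i‖₊) (Finset.mem_univ i)
  have hr : r < 1 := (Finset.sup_lt_iff zero_lt_one).2 fun i _ => by
    rw [← NNReal.coe_lt_coe, coe_nnnorm]
    exact hc i
  obtain ⟨Γ, hΓc, hΓne, hΓ⟩ := exists_isCompact_nonempty_iUnion_image_eq hr fun i =>
    (lipschitzWith_mul_add (c i) (A i 0 1)).weaken (hcr i)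
  obtain ⟨M, hM⟩ := hK₀c.exists_bound_of_continuousOn (f := fun v => v 1 - v 0) (by fun_prop)
  obtain ⟨R, hR⟩ := hΓc.exists_bound_of_continuousOn continuousOn_id
  refine ⟨c, fun i => A i 0 1, hc, Γ, hΓc, hΓne, hΓ, fun v => v 1 - v 0, fun v => v 0, ?_⟩
  have hlim := (tendsto_pow_atTop_nhds_zero_of_lt_one r.2 hr).const_mul (M * (2 * R + 1))
  rw [mul_zero] at hlim
  refine squeeze_zero (fun n => hausdorffDist_nonneg) (fun n => ?_) hlim
  rw [hausdorffDist_closure₂]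
  exact hausdorffDist_hutch_iterate_le hfA hΓ (fun i => NNReal.coe_le_coe.2 (hcr i)) hK₀ne hΓne
    hM hR n
end
end

section
/- Let p ≥ 1 linear maps f_i on ℝ^D and suppose there exist subspaces V, W ⊆ ℝ^D with V ⊕ W = ℝ^D such that for all i: (i) f_i(V) ⊆ V and the induced map f_{i,V} : V → V is either a contraction or the identity; (ii) f_i(W) ⊆ W and the induced map f_{i,W} : W → W is a contraction. Then (H^n(K_0))_n converges in the Hausdorff metric for every nonempty compact K_0 ⊆ ℝ^D to a set L. Precisely: either at least one f_{i,V} is the identity, and then L = cl(⋃_{n≥0} p_{V,W}(H^n(K_0))) where p_{V,W} is the projection onto V along W; or else L = {0}. Moreover, L is the limit of the sequence (H_V^n(p_{V,W}(K_0)))_n where H_V is the Hutchinson operator of the IFS {f_{1,V},…,f_{p,V}}. -/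
/-!
Every `f_i` preserves `V` and `W`, so the projection `P = p_{V,W}` commutes with the `f_i`:
`P(Hⁿ K₀) = H_Vⁿ(P K₀)`, while the `W`-components of the points of `Hⁿ K₀` shrink geometrically.
Hence `Hⁿ K₀` and `P(Hⁿ K₀)` have the same Hausdorff limit. If some `f_{i,V}` is the identity,
the projected iterates increase, and stay in a fixed ball because every `f_{i,V}` is
nonexpanding; an increasing sequence of sets with relatively compact union converges to the
closure of the union. Otherwise both components contract and the iterates shrink to `{0}`.
-/

open Metric Filter Pointwise Topology

noncomputable section

/-- The projection onto `V` along `W` for complementary subspaces `V ⊕ W = ℝ^D`. -/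
def projVW {D : ℕ} (V W : Submodule ℝ (EuclideanSpace ℝ (Fin D))) (h : IsCompl V W) :
    EuclideanSpace ℝ (Fin D) →ₗ[ℝ] EuclideanSpace ℝ (Fin D) :=
  V.subtype ∘ₗ Submodule.linearProjOfIsCompl V W h

lemma projVW_eq_projection {D : ℕ} (V W : Submodule ℝ (EuclideanSpace ℝ (Fin D)))
    (h : IsCompl V W) : projVW V W h = V.projection W h :=
  rfl

namespace Submodule

variable {R E : Type*} [Ring R] [AddCommGroup E] [Module R E] {V W : Submodule R E}

lemma projection_map_comm (h : IsCompl V W) {T : E →ₗ[R] E} (hTV : ∀ v ∈ V, T v ∈ V)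
    (hTW : ∀ w ∈ W, T w ∈ W) (x : E) : V.projection W h (T x) = T (V.projection W h x) := by
  have hcomm : Commute (V.projection W h) T :=
    (LinearMap.IsIdempotentElem.commute_iff (isIdempotentElem_projection h)).2
      ⟨by rw [range_projection]; exact hTV, by rw [ker_projection]; exact hTW⟩
  exact LinearMap.congr_fun hcomm.eq x

end Submodule

lemma Submodule.norm_projection_map_le {E : Type*} [SeminormedAddCommGroup E] [NormedSpace ℝ E]
    {V W : Submodule ℝ E} (h : IsCompl V W) {T : E →ₗ[ℝ] E} (hTV : ∀ v ∈ V, T v ∈ V)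
    (hTW : ∀ w ∈ W, T w ∈ W) {c : ℝ} (hc : ∀ v ∈ V, ‖T v‖ ≤ c * ‖v‖) (x : E) :
    ‖V.projection W h (T x)‖ ≤ c * ‖V.projection W h x‖ := by
  rw [projection_map_comm h hTV hTW]
  exact hc _ (projection_apply_mem h x)

lemma exists_uniform_contraction_const {ι E : Type*} [Finite ι] [Nonempty ι]
    [SeminormedAddCommGroup E] {T : ι → E → E} {S : Set E}
    (h : ∀ i, ∃ c : ℝ, 0 ≤ c ∧ c < 1 ∧ ∀ v ∈ S, ‖T i v‖ ≤ c * ‖v‖) :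
    ∃ c : ℝ, 0 ≤ c ∧ c < 1 ∧ ∀ i, ∀ v ∈ S, ‖T i v‖ ≤ c * ‖v‖ := by
  choose c hc0 hc1 hc using h
  obtain ⟨j, hj⟩ := Finite.exists_max c
  exact ⟨c j, hc0 j, hc1 j, fun i v hv =>
    (hc i v hv).trans (mul_le_mul_of_nonneg_right (hj i) (norm_nonneg v))⟩

section HausdorffDist

variable {α : Type*} [PseudoMetricSpace α]

lemma hausdorffDist_image_le {s : Set α} {g : α → α} {r : ℝ} (hs : s.Nonempty)
    (h : ∀ x ∈ s, dist x (g x) ≤ r) : hausdorffDist s (g '' s) ≤ r :=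
  hausdorffDist_le_of_mem_dist (dist_nonneg.trans (h _ hs.some_mem))
    (fun x hx => ⟨g x, Set.mem_image_of_mem g hx, h x hx⟩)
    (by rintro _ ⟨x, hx, rfl⟩; exact ⟨x, hx, dist_comm x (g x) ▸ h x hx⟩)

lemma hausdorffDist_singleton_le {s : Set α} {a : α} {r : ℝ} (hs : s.Nonempty)
    (h : ∀ x ∈ s, dist x a ≤ r) : hausdorffDist s {a} ≤ r := by
  obtain ⟨x₀, hx₀⟩ := hs
  refine hausdorffDist_le_of_mem_dist (dist_nonneg.trans (h x₀ hx₀))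
    (fun x hx => ⟨a, rfl, h x hx⟩) ?_
  intro y hy
  rw [Set.mem_singleton_iff.1 hy]
  exact ⟨x₀, hx₀, dist_comm a x₀ ▸ h x₀ hx₀⟩

/-- The closure of the union is covered by finitely many `ε`-thickenings of the `K n`, hence by
a single one. -/
lemma tendsto_hausdorffDist_closure_iUnion {K : ℕ → Set α} (hK : Monotone K)
    (hc : IsCompact (closure (⋃ n, K n))) :
    Tendsto (fun n => hausdorffDist (K n) (closure (⋃ n, K n))) atTop (𝓝 0) := by
  refine Metric.tendsto_atTop.2 fun ε hε => ?_
  have hcov : closure (⋃ n, K n) ⊆ ⋃ n, thickening (ε / 2) (K n) := by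
    intro y hy
    obtain ⟨z, hz, hyz⟩ := Metric.mem_closure_iff.1 hy (ε / 2) (half_pos hε)
    obtain ⟨n, hn⟩ := Set.mem_iUnion.1 hz
    exact Set.mem_iUnion.2 ⟨n, mem_thickening_iff.2 ⟨z, hn, hyz⟩⟩
  have hmono : Monotone fun n => thickening (ε / 2) (K n) :=
    fun m n hmn => thickening_subset_of_subset _ (hK hmn)
  obtain ⟨N, hN⟩ := hc.elim_directed_cover _ (fun n => isOpen_thickening) hcov hmono.directed_le
  refine ⟨N, fun n hn => ?_⟩
  have hle : hausdorffDist (K n) (closure (⋃ n, K n)) ≤ ε / 2 := by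
    refine hausdorffDist_le_of_mem_dist (half_pos hε).le (fun x hx => ?_) fun y hy => ?_
    · exact ⟨x, subset_closure (Set.mem_iUnion_of_mem n hx), by simpa using (half_pos hε).le⟩
    · obtain ⟨z, hz, hyz⟩ := mem_thickening_iff.1 (hmono hn (hN hy))
      exact ⟨z, hz, hyz.le⟩
  rw [Real.dist_0_eq_abs, abs_of_nonneg hausdorffDist_nonneg]
  linarith

lemma tendsto_hausdorffDist_of_tendsto_of_tendsto {s t : ℕ → Set α} {L : Set α}
    (hfin : ∀ n, hausdorffEDist (s n) (t n) ≠ ⊤)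
    (hst : Tendsto (fun n => hausdorffDist (s n) (t n)) atTop (𝓝 0))
    (htL : Tendsto (fun n => hausdorffDist (t n) L) atTop (𝓝 0)) :
    Tendsto (fun n => hausdorffDist (s n) L) atTop (𝓝 0) :=
  squeeze_zero (fun _ => hausdorffDist_nonneg) (fun n => hausdorffDist_triangle (hfin n))
    (by simpa using hst.add htL)

end HausdorffDist

section Hutchinson

variable {D p : ℕ} {f : Fin (p + 1) → EuclideanSpace ℝ (Fin D) → EuclideanSpace ℝ (Fin D)}
  {K : Set (EuclideanSpace ℝ (Fin D))}

lemma mem_hutch {x : EuclideanSpace ℝ (Fin D)} : x ∈ hutch f K ↔ ∃ i, ∃ y ∈ K, f i y = x := by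
  simp [hutch]

lemma isCompact_hutch_iterate (hf : ∀ i, Continuous (f i)) (hK : IsCompact K) (n : ℕ) :
    IsCompact ((hutch f)^[n] K) := by
  induction n with
  | zero => exact hK
  | succ n ih =>
    rw [Function.iterate_succ_apply']
    exact isCompact_iUnion fun i => ih.image (hf i)

lemma hutch_iterate_nonempty (hK : K.Nonempty) (n : ℕ) : ((hutch f)^[n] K).Nonempty := by
  induction n with
  | zero => exact hK
  | succ n ih =>
    rw [Function.iterate_succ_apply']
    exact Set.nonempty_iUnion.2 ⟨0, ih.image _⟩

lemma image_hutch_iterate {g : EuclideanSpace ℝ (Fin D) → EuclideanSpace ℝ (Fin D)}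
    (hg : ∀ i x, g (f i x) = f i (g x)) (n : ℕ) (K : Set (EuclideanSpace ℝ (Fin D))) :
    g '' (hutch f)^[n] K = (hutch f)^[n] (g '' K) := by
  have hcomm : Function.Commute (Set.image g) (hutch f) := fun K => by
    simp only [hutch, Set.image_iUnion, Set.image_image, hg]
  exact hcomm.iterate_right n K

lemma subset_hutch {i : Fin (p + 1)} (hi : ∀ x ∈ K, f i x = x) : K ⊆ hutch f K :=
  fun x hx => mem_hutch.2 ⟨i, x, hx, hi x hx⟩

lemma le_of_mem_hutch_iterate {φ : EuclideanSpace ℝ (Fin D) → ℝ} {c M : ℝ} (hc : 0 ≤ c)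
    (hφ : ∀ i x, φ (f i x) ≤ c * φ x) (hM : ∀ x ∈ K, φ x ≤ M) (n : ℕ) :
    ∀ x ∈ (hutch f)^[n] K, φ x ≤ c ^ n * M := by
  induction n with
  | zero => simpa using hM
  | succ n ih =>
    intro x hx
    rw [Function.iterate_succ_apply'] at hx
    obtain ⟨i, y, hy, rfl⟩ := mem_hutch.1 hx
    calc φ (f i y) ≤ c * φ y := hφ i y
      _ ≤ c * (c ^ n * M) := mul_le_mul_of_nonneg_left (ih y hy) hc
      _ = c ^ (n + 1) * M := by ring

end Hutchinson

section LinearIFS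

variable {D p : ℕ} {A : Fin (p + 1) → EuclideanSpace ℝ (Fin D) →L[ℝ] EuclideanSpace ℝ (Fin D)}
  {V W : Submodule ℝ (EuclideanSpace ℝ (Fin D))} {K : Set (EuclideanSpace ℝ (Fin D))}

local notation "H" => hutch fun i x => A i x

lemma image_projection_hutch_iterate (hVW : IsCompl V W) (hAV : ∀ i, ∀ v ∈ V, A i v ∈ V)
    (hAW : ∀ i, ∀ w ∈ W, A i w ∈ W) (n : ℕ) :
    V.projection W hVW '' H^[n] K = H^[n] (V.projection W hVW '' K) :=
  image_hutch_iterate (fun i => Submodule.projection_map_comm hVW (T := (A i).toLinearMap)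
    (hAV i) (hAW i)) n K

lemma norm_projection_le_of_mem_hutch_iterate (hVW : IsCompl V W)
    (hAV : ∀ i, ∀ v ∈ V, A i v ∈ V) (hAW : ∀ i, ∀ w ∈ W, A i w ∈ W) {c M : ℝ} (hc0 : 0 ≤ c)
    (hc : ∀ i, ∀ v ∈ V, ‖A i v‖ ≤ c * ‖v‖) (hM : ∀ x ∈ K, ‖V.projection W hVW x‖ ≤ M) (n : ℕ) :
    ∀ x ∈ H^[n] K, ‖V.projection W hVW x‖ ≤ c ^ n * M :=
  le_of_mem_hutch_iterate hc0 (fun i => Submodule.norm_projection_map_le hVW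
    (T := (A i).toLinearMap) (hAV i) (hAW i) (hc i)) hM n

lemma tendsto_hausdorffDist_hutch_iterate_image_projection (hVW : IsCompl V W)
    (hAV : ∀ i, ∀ v ∈ V, A i v ∈ V) (hAW : ∀ i, ∀ w ∈ W, A i w ∈ W) {c : ℝ} (hc0 : 0 ≤ c)
    (hc1 : c < 1) (hc : ∀ i, ∀ w ∈ W, ‖A i w‖ ≤ c * ‖w‖) (hK : IsCompact K) (hKne : K.Nonempty) :
    Tendsto (fun n => hausdorffDist (H^[n] K) (V.projection W hVW '' H^[n] K)) atTop (𝓝 0) := by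
  obtain ⟨M, hM⟩ := hK.exists_bound_of_continuousOn
    (W.projection V hVW.symm).continuous_of_finiteDimensional.continuousOn
  have hdecay := norm_projection_le_of_mem_hutch_iterate hVW.symm hAW hAV hc0 hc hM
  refine squeeze_zero (fun _ => hausdorffDist_nonneg)
    (fun n => hausdorffDist_image_le (hutch_iterate_nonempty hKne n) fun x hx => ?_)
    (by simpa using (tendsto_pow_atTop_nhds_zero_of_lt_one hc0 hc1).mul_const M)
  rw [dist_eq_norm, ← Submodule.projection_eq_self_sub_projection]
  exact hdecay n x hx

lemma tendsto_hausdorffDist_hutch_iterate_of_projection (hVW : IsCompl V W)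
    (hAV : ∀ i, ∀ v ∈ V, A i v ∈ V) (hAW : ∀ i, ∀ w ∈ W, A i w ∈ W) {c : ℝ} (hc0 : 0 ≤ c)
    (hc1 : c < 1) (hc : ∀ i, ∀ w ∈ W, ‖A i w‖ ≤ c * ‖w‖) (hK : IsCompact K) (hKne : K.Nonempty)
    {L : Set (EuclideanSpace ℝ (Fin D))}
    (hL : Tendsto (fun n => hausdorffDist (H^[n] (V.projection W hVW '' K)) L) atTop (𝓝 0)) :
    Tendsto (fun n => hausdorffDist (H^[n] K) L) atTop (𝓝 0) := by
  have hcpt (n : ℕ) : IsCompact (H^[n] K) :=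
    isCompact_hutch_iterate (fun i => (A i).continuous) hK n
  have hne (n : ℕ) : (H^[n] K).Nonempty := hutch_iterate_nonempty hKne n
  refine tendsto_hausdorffDist_of_tendsto_of_tendsto (fun n => ?_)
    (tendsto_hausdorffDist_hutch_iterate_image_projection hVW hAV hAW hc0 hc1 hc hK hKne)
    (by simpa only [image_projection_hutch_iterate hVW hAV hAW] using hL)
  exact hausdorffEDist_ne_top_of_nonempty_of_bounded (hne n) ((hne n).image _)
    (hcpt n).isBounded
    ((hcpt n).image (V.projection W hVW).continuous_of_finiteDimensional).isBounded

lemma tendsto_hausdorffDist_hutch_iterate_projection (hVW : IsCompl V W)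
    (hAV : ∀ i, ∀ v ∈ V, A i v ∈ V) (hAW : ∀ i, ∀ w ∈ W, A i w ∈ W)
    (hAle : ∀ i, ∀ v ∈ V, ‖A i v‖ ≤ ‖v‖) {i₀ : Fin (p + 1)} (hi₀ : ∀ v ∈ V, A i₀ v = v)
    (hK : IsCompact K) :
    Tendsto (fun n => hausdorffDist (H^[n] (V.projection W hVW '' K))
      (closure (⋃ n, V.projection W hVW '' H^[n] K))) atTop (𝓝 0) := by
  simp only [image_projection_hutch_iterate hVW hAV hAW]
  have hsubV (n : ℕ) : H^[n] (V.projection W hVW '' K) ⊆ V := by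
    rw [← image_projection_hutch_iterate hVW hAV hAW]
    exact Set.image_subset_iff.2 fun x _ => Submodule.projection_apply_mem hVW x
  obtain ⟨M, hM⟩ := hK.exists_bound_of_continuousOn
    (V.projection W hVW).continuous_of_finiteDimensional.continuousOn
  have hbound (n : ℕ) : H^[n] (V.projection W hVW '' K) ⊆ closedBall 0 M := by
    rw [← image_projection_hutch_iterate hVW hAV hAW]
    rintro _ ⟨x, hx, rfl⟩
    simpa using norm_projection_le_of_mem_hutch_iterate hVW hAV hAW zero_le_one
      (by simpa using hAle) hM n x hx
  refine tendsto_hausdorffDist_closure_iUnion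
    (monotone_nat_of_le_succ fun n => ?_)
    ((isCompact_closedBall 0 M).of_isClosed_subset isClosed_closure
      (closure_minimal (Set.iUnion_subset hbound) isClosed_closedBall))
  rw [Function.iterate_succ_apply']
  exact subset_hutch fun x hx => hi₀ x (hsubV n hx)

lemma tendsto_hausdorffDist_hutch_iterate_zero (hVW : IsCompl V W)
    (hAV : ∀ i, ∀ v ∈ V, A i v ∈ V) (hAW : ∀ i, ∀ w ∈ W, A i w ∈ W) {cV cW : ℝ}
    (hcV0 : 0 ≤ cV) (hcV1 : cV < 1) (hcV : ∀ i, ∀ v ∈ V, ‖A i v‖ ≤ cV * ‖v‖)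
    (hcW0 : 0 ≤ cW) (hcW1 : cW < 1) (hcW : ∀ i, ∀ w ∈ W, ‖A i w‖ ≤ cW * ‖w‖)
    (hK : IsCompact K) (hKne : K.Nonempty) :
    Tendsto (fun n => hausdorffDist (H^[n] K) {0}) atTop (𝓝 0) := by
  obtain ⟨MV, hMV⟩ := hK.exists_bound_of_continuousOn
    (V.projection W hVW).continuous_of_finiteDimensional.continuousOn
  obtain ⟨MW, hMW⟩ := hK.exists_bound_of_continuousOn
    (W.projection V hVW.symm).continuous_of_finiteDimensional.continuousOn
  have hdecayV := norm_projection_le_of_mem_hutch_iterate hVW hAV hAW hcV0 hcV hMV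
  have hdecayW := norm_projection_le_of_mem_hutch_iterate hVW.symm hAW hAV hcW0 hcW hMW
  refine squeeze_zero (fun _ => hausdorffDist_nonneg)
    (fun n => hausdorffDist_singleton_le (hutch_iterate_nonempty hKne n) fun x hx => ?_)
    (g := fun n => cV ^ n * MV + cW ^ n * MW) ?_
  · rw [dist_zero_right]
    calc ‖x‖ = ‖V.projection W hVW x + W.projection V hVW.symm x‖ := by
          rw [Submodule.projection_add_projection_eq_self]
      _ ≤ ‖V.projection W hVW x‖ + ‖W.projection V hVW.symm x‖ := norm_add_le _ _
      _ ≤ cV ^ n * MV + cW ^ n * MW := add_le_add (hdecayV n x hx) (hdecayW n x hx)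
  · simpa using ((tendsto_pow_atTop_nhds_zero_of_lt_one hcV0 hcV1).mul_const MV).add
      ((tendsto_pow_atTop_nhds_zero_of_lt_one hcW0 hcW1).mul_const MW)

end LinearIFS

/-- Theorem `theo:linproj`. Suppose `ℝ^D = V ⊕ W`, each `f_i` preserves `V`
and `W`, the induced maps on `V` are contractions or the identity, and the induced maps on `W`
are contractions. Then `(H^n(K₀))_n` converges for every nonempty compact `K₀`: if at least one
induced map on `V` is the identity, the limit is `L = cl(⋃_n p_{V,W}(H^n(K₀)))`, otherwise the
limit is `{0}`; in both cases `L` is also the limit of `(H_V^n(p_{V,W}(K₀)))_n`. -/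
theorem stmt12 {D p : ℕ}
    (A : Fin (p + 1) → EuclideanSpace ℝ (Fin D) →L[ℝ] EuclideanSpace ℝ (Fin D))
    (f : Fin (p + 1) → EuclideanSpace ℝ (Fin D) → EuclideanSpace ℝ (Fin D))
    (hf : ∀ i x, f i x = A i x)
    (V W : Submodule ℝ (EuclideanSpace ℝ (Fin D))) (hVW : IsCompl V W)
    (hV : ∀ i, (∀ v ∈ V, A i v ∈ V) ∧
      ((∃ c : ℝ, 0 ≤ c ∧ c < 1 ∧ ∀ v ∈ V, ‖A i v‖ ≤ c * ‖v‖) ∨ (∀ v ∈ V, A i v = v)))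
    (hW : ∀ i, (∀ w ∈ W, A i w ∈ W) ∧
      (∃ c : ℝ, 0 ≤ c ∧ c < 1 ∧ ∀ w ∈ W, ‖A i w‖ ≤ c * ‖w‖))
    (K₀ : Set (EuclideanSpace ℝ (Fin D))) (hK₀c : IsCompact K₀) (hK₀ne : K₀.Nonempty) :
    ((∃ i, ∀ v ∈ V, A i v = v) →
      Tendsto (fun n => hausdorffDist ((hutch f)^[n] K₀)
        (closure (⋃ n, projVW V W hVW '' ((hutch f)^[n] K₀)))) atTop (𝓝 0) ∧
      Tendsto (fun n => hausdorffDist ((hutch f)^[n] (projVW V W hVW '' K₀))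
        (closure (⋃ n, projVW V W hVW '' ((hutch f)^[n] K₀)))) atTop (𝓝 0)) ∧
    ((∀ i, ¬ (∀ v ∈ V, A i v = v)) →
      Tendsto (fun n => hausdorffDist ((hutch f)^[n] K₀) {0}) atTop (𝓝 0) ∧
      Tendsto (fun n => hausdorffDist ((hutch f)^[n] (projVW V W hVW '' K₀)) {0})
        atTop (𝓝 0)) := by
  obtain rfl : f = fun i x => A i x := funext fun i => funext (hf i)
  rw [projVW_eq_projection]
  have hAV i := (hV i).1
  have hAW i := (hW i).1
  obtain ⟨cW, hcW0, hcW1, hcW⟩ := exists_uniform_contraction_const fun i => (hW i).2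
  refine ⟨fun ⟨i₀, hi₀⟩ => ?_, fun hnot => ?_⟩
  · have hAle : ∀ i, ∀ v ∈ V, ‖A i v‖ ≤ ‖v‖ := fun i v hv => by
      rcases (hV i).2 with ⟨c, -, hc1, hc⟩ | hid
      · exact (hc v hv).trans (mul_le_of_le_one_left (norm_nonneg v) hc1.le)
      · rw [hid v hv]
    have hproj := tendsto_hausdorffDist_hutch_iterate_projection hVW hAV hAW hAle hi₀ hK₀c
    exact ⟨tendsto_hausdorffDist_hutch_iterate_of_projection hVW hAV hAW hcW0 hcW1 hcW hK₀c
      hK₀ne hproj, hproj⟩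
  · obtain ⟨cV, hcV0, hcV1, hcV⟩ :=
      exists_uniform_contraction_const fun i => (hV i).2.resolve_right (hnot i)
    exact ⟨tendsto_hausdorffDist_hutch_iterate_zero hVW hAV hAW hcV0 hcV1 hcV hcW0 hcW1 hcW
        hK₀c hK₀ne,
      tendsto_hausdorffDist_hutch_iterate_zero hVW hAV hAW hcV0 hcV1 hcV hcW0 hcW1 hcW
        (hK₀c.image (V.projection W hVW).continuous_of_finiteDimensional) (hK₀ne.image _)⟩
end
end

section
/- Let p ≥ 1 linear maps f_i(x) = A_i x on ℝ^D such that: (i) ‖A_i‖ ≤ 1 (operator norm) for all i; (ii) there exist N ≥ 1 and indices i_1,…,i_N ∈ {1,…,p} such that the matrix A_{i_N}⋯A_{i_1} has 1 as an eigenvalue. Then the sequence (H^n(B(0,1)))_n is decreasing and converges in the Hausdorff metric to L = ⋂_{n≥0} H^n(B(0,1)), with ρ(L) = 1. Moreover H_ρ^n(B(0,1)) = H^n(B(0,1)) and d_n = 1 for all n ≥ 0. -/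
open Metric Filter Pointwise Topology

noncomputable section

/-!
Since every `A i` is a contraction, `H(B) ⊆ B` for the unit ball `B`, so the iterates `H^n(B)`
decrease, and a decreasing sequence of compact sets converges in the Hausdorff metric to its
intersection. A unit vector `u` fixed by `A_{i_N} ⋯ A_{i_1}` lies in `H^{kN}(B)` for every `k`,
hence in every `H^n(B)`; so all these sets, and `L`, have radius exactly `1`, which makes the
renormalisation in `H_ρ` trivial.
-/

open Set

theorem Metric.hausdorffDist_le_of_subset_thickening {X : Type*} [PseudoMetricSpace X]
    {s t : Set X} {r : ℝ} (hr : 0 ≤ r) (hst : s ⊆ thickening r t) (hts : t ⊆ s) :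
    hausdorffDist s t ≤ r := by
  refine hausdorffDist_le_of_mem_dist hr (fun x hx => ?_) fun y hy => ⟨y, hts hy, by simp [hr]⟩
  obtain ⟨y, hy, hxy⟩ := mem_thickening_iff.1 (hst hx)
  exact ⟨y, hy, hxy.le⟩

theorem Metric.tendsto_hausdorffDist_iInter_of_antitone {X : Type*} [MetricSpace X]
    {K : ℕ → Set X} (hK : Antitone K) (hKc : ∀ n, IsCompact (K n)) :
    Tendsto (fun n => hausdorffDist (K n) (⋂ n, K n)) atTop (𝓝 0) := by
  rw [Metric.tendsto_atTop]
  intro ε hε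
  obtain ⟨n₀, hn₀⟩ := exists_subset_nhds_of_isCompact hK.directed_ge hKc fun x hx =>
    isOpen_thickening.mem_nhds (self_subset_thickening (half_pos hε) _ hx)
  refine ⟨n₀, fun n hn => ?_⟩
  have hle := hausdorffDist_le_of_subset_thickening (half_pos hε).le ((hK hn).trans hn₀)
    (iInter_subset K n)
  rw [Real.dist_eq, sub_zero, abs_of_nonneg hausdorffDist_nonneg]
  linarith

theorem Set.mem_of_antitone_of_mem_add {α : Type*} {S : ℕ → Set α} (hS : Antitone S) {N : ℕ}
    (hN : 0 < N) {u : α} (h₀ : u ∈ S 0) (hstep : ∀ n, u ∈ S n → u ∈ S (n + N)) (n : ℕ) :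
    u ∈ S n := by
  have hmul : ∀ k, u ∈ S (k * N) := by
    intro k
    induction k with
    | zero => simpa using h₀
    | succ k ih => simpa [Nat.succ_mul] using hstep _ ih
  exact hS (Nat.le_mul_of_pos_right n hN) (hmul n)

theorem ContinuousLinearMap.mapsTo_closedBall_zero {E : Type*} [SeminormedAddCommGroup E]
    [NormedSpace ℝ E] {T : E →L[ℝ] E} (hT : ‖T‖ ≤ 1) (r : ℝ) :
    MapsTo T (closedBall 0 r) (closedBall 0 r) := by
  intro x hx
  rw [mem_closedBall_zero_iff] at hx ⊢
  calc ‖T x‖ ≤ 1 * ‖x‖ := T.le_of_opNorm_le hT x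
    _ ≤ r := by rwa [one_mul]

theorem Module.End.HasEigenvalue.exists_norm_eq_one_apply_eq_self {E : Type*}
    [NormedAddCommGroup E] [NormedSpace ℝ E] {T : E →L[ℝ] E}
    (h : Module.End.HasEigenvalue T.toLinearMap 1) : ∃ u, ‖u‖ = 1 ∧ T u = u := by
  obtain ⟨v, hv⟩ := h.exists_hasEigenvector
  have hTv : T v = v := by simpa using hv.apply_eq_smul
  exact ⟨‖v‖⁻¹ • v, norm_smul_inv_norm hv.2, by rw [map_smul, hTv]⟩

section Hutchinson

variable {D p : ℕ} {f : Fin (p + 1) → EuclideanSpace ℝ (Fin D) → EuclideanSpace ℝ (Fin D)}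

theorem rad_eq_of_mem_of_subset_closedBall {S : Set (EuclideanSpace ℝ (Fin D))}
    {u : EuclideanSpace ℝ (Fin D)} {r : ℝ} (hu : u ∈ S) (hur : ‖u‖ = r)
    (hS : S ⊆ closedBall 0 r) : rad S = r := by
  subst hur
  refine IsGreatest.csSup_eq ⟨⟨u, hu, rfl⟩, ?_⟩
  rintro _ ⟨x, hx, rfl⟩
  exact mem_closedBall_zero_iff.1 (hS hx)

variable (f) in
theorem hutch_mono : Monotone (hutch f) :=
  fun _ _ h => iUnion_mono fun _ => image_mono h

theorem hutch_subset_of_mapsTo {K : Set (EuclideanSpace ℝ (Fin D))} (h : ∀ i, MapsTo (f i) K K) :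
    hutch f K ⊆ K :=
  iUnion_subset fun i => (h i).image_subset

theorem IsCompact.iterate_hutch (hf : ∀ i, Continuous (f i)) {K : Set (EuclideanSpace ℝ (Fin D))}
    (hK : IsCompact K) (n : ℕ) : IsCompact ((hutch f)^[n] K) := by
  induction n with
  | zero => exact hK
  | succ n ih =>
    rw [Function.iterate_succ_apply']
    exact isCompact_iUnion fun i => ih.image (hf i)

theorem listProd_apply_mem_iterate_hutch
    (A : Fin (p + 1) → EuclideanSpace ℝ (Fin D) →L[ℝ] EuclideanSpace ℝ (Fin D))
    (l : List (Fin (p + 1))) {K : Set (EuclideanSpace ℝ (Fin D))} {x : EuclideanSpace ℝ (Fin D)}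
    (hx : x ∈ K) : (l.map A).reverse.prod x ∈ (hutch fun i => A i)^[l.length] K := by
  induction l generalizing K x with
  | nil => simpa using hx
  | cons i l ih =>
    have hAx : A i x ∈ hutch (fun i => A i) K := mem_iUnion.2 ⟨i, mem_image_of_mem _ hx⟩
    simpa using ih hAx

theorem iterate_hutchRho_eq_iterate_hutch {K : Set (EuclideanSpace ℝ (Fin D))}
    (h : ∀ n, rad ((hutch f)^[n + 1] K) = 1) (n : ℕ) :
    (hutchRho f)^[n] K = (hutch f)^[n] K := by
  induction n with
  | zero => rfl
  | succ n ih =>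
    rw [Function.iterate_succ_apply', ih, hutchRho, ← Function.iterate_succ_apply' (hutch f),
      h n, inv_one, one_smul, Function.iterate_succ_apply']

end Hutchinson

/-- Proposition `prop:linboule`. For a linear IFS with `‖A_i‖ ≤ 1` such that
some finite product `A_{i_N} ⋯ A_{i_1}` has eigenvalue `1`, the orbit `(H^n(B(0,1)))_n` is
decreasing and converges in the Hausdorff metric to `L = ⋂_n H^n(B(0,1))` with `ρ(L) = 1`;
moreover `H_ρ^n(B(0,1)) = H^n(B(0,1))` and `d_n = 1` for all `n`. -/
theorem stmt14 {D p : ℕ}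
    (A : Fin (p + 1) → EuclideanSpace ℝ (Fin D) →L[ℝ] EuclideanSpace ℝ (Fin D))
    (f : Fin (p + 1) → EuclideanSpace ℝ (Fin D) → EuclideanSpace ℝ (Fin D))
    (hf : ∀ i x, f i x = A i x)
    (hA : ∀ i, ‖A i‖ ≤ 1)
    (heig : ∃ N : ℕ, 1 ≤ N ∧ ∃ w : Fin N → Fin (p + 1),
      Module.End.HasEigenvalue
        (((List.ofFn fun j : Fin N => A (w j)).reverse.prod).toLinearMap) 1) :
    (∀ n, (hutch f)^[n + 1] (closedBall (0 : EuclideanSpace ℝ (Fin D)) 1) ⊆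
      (hutch f)^[n] (closedBall 0 1)) ∧
    Tendsto (fun n => hausdorffDist ((hutch f)^[n] (closedBall (0 : EuclideanSpace ℝ (Fin D)) 1))
      (⋂ n, (hutch f)^[n] (closedBall 0 1))) atTop (𝓝 0) ∧
    rad (⋂ n, (hutch f)^[n] (closedBall (0 : EuclideanSpace ℝ (Fin D)) 1)) = 1 ∧
    (∀ n, (hutchRho f)^[n] (closedBall (0 : EuclideanSpace ℝ (Fin D)) 1) =
      (hutch f)^[n] (closedBall 0 1)) ∧
    (∀ n, rad (hutch f ((hutchRho f)^[n] (closedBall (0 : EuclideanSpace ℝ (Fin D)) 1))) = 1) := by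
  obtain rfl : f = fun i => ⇑(A i) := funext fun i => funext (hf i)
  set B := closedBall (0 : EuclideanSpace ℝ (Fin D)) 1
  have hanti : Antitone fun n => (hutch fun i => A i)^[n] B :=
    (hutch_mono _).antitone_iterate_of_map_le
      (hutch_subset_of_mapsTo fun i => (A i).mapsTo_closedBall_zero (hA i) 1)
  obtain ⟨N, hN, w, heig⟩ := heig
  obtain ⟨u, hu_norm, hu_fixed⟩ := heig.exists_norm_eq_one_apply_eq_self
  have hu : ∀ n, u ∈ (hutch fun i => A i)^[n] B := by
    refine mem_of_antitone_of_mem_add hanti hN (mem_closedBall_zero_iff.2 hu_norm.le) ?_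
    intro n hn
    rw [Nat.add_comm n N, Function.iterate_add_apply]
    have hprod := listProd_apply_mem_iterate_hutch A (List.ofFn w) hn
    rwa [List.map_ofFn, List.length_ofFn, Function.comp_def, hu_fixed] at hprod
  have hrad : ∀ n, rad ((hutch fun i => A i)^[n] B) = 1 := fun n =>
    rad_eq_of_mem_of_subset_closedBall (hu n) hu_norm (hanti n.zero_le)
  have hRho := iterate_hutchRho_eq_iterate_hutch fun n => hrad (n + 1)
  refine ⟨fun n => hanti n.le_succ,
    tendsto_hausdorffDist_iInter_of_antitone hanti
      ((isCompact_closedBall 0 1).iterate_hutch fun i => (A i).continuous),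
    rad_eq_of_mem_of_subset_closedBall (mem_iInter.2 hu) hu_norm (iInter_subset _ 0), hRho,
    fun n => ?_⟩
  rw [hRho, ← Function.iterate_succ_apply' (hutch _)]
  exact hrad (n + 1)
end
end
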